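/- arXiv:1808.09312 — 7 statements merged into one kernel-verified Lean document; each statement's English description precedes it below -/
import Mathlib

section
/- Let P ⊆ ℝ^d be a compact convex set and let Q ⊆ ℝ^d be an open convex set with P ∩ Q ≠ ∅. Then (∂P) \ Q is a strong deformation retract of P \ Q; in particular the two sets are homotopy equivalent. -/
open Set Topology Filter

lemma aux_transfer {E : Type*} [NormedAddCommGroup E] [NormedSpace ℝ E]
    (P : Set E) (x₀ : E) (hx₀ : x₀ ∈ affineSpan ℝ P) :
    interior {v : (affineSpan ℝ P).direction | (v : E) + x₀ ∈ P}
      = {v : (affineSpan ℝ P).direction | (v : E) + x₀ ∈ intrinsicInterior ℝ P} ∧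
    frontier {v : (affineSpan ℝ P).direction | (v : E) + x₀ ∈ P}
      = {v : (affineSpan ℝ P).direction | (v : E) + x₀ ∈ intrinsicFrontier ℝ P} := by
  haveI : Nonempty (affineSpan ℝ P) := ⟨⟨x₀, hx₀⟩⟩
  set e := (AffineIsometryEquiv.vaddConst ℝ (⟨x₀, hx₀⟩ : affineSpan ℝ P)).toHomeomorph with he
  have hco : ∀ v : (affineSpan ℝ P).direction, ((e v : affineSpan ℝ P) : E) = (v : E) + x₀ := by
    intro v
    show ((v +ᵥ (⟨x₀, hx₀⟩ : affineSpan ℝ P) : affineSpan ℝ P) : E) = (v : E) + x₀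
    rw [AffineSubspace.coe_vadd]
    rfl
  have himg : ∀ T : Set (affineSpan ℝ P),
      e ⁻¹' T = {v : (affineSpan ℝ P).direction | (v : E) + x₀ ∈ (↑) '' T} := by
    intro T
    ext v
    simp only [Set.mem_preimage, Set.mem_setOf_eq, ← hco v]
    constructor
    · exact fun h => ⟨e v, h, rfl⟩
    · rintro ⟨q, hq, hqe⟩
      rwa [show q = e v from Subtype.coe_injective hqe] at hq
  have hK : {v : (affineSpan ℝ P).direction | (v : E) + x₀ ∈ P}
      = e ⁻¹' ((↑) ⁻¹' P : Set (affineSpan ℝ P)) := by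
    ext v
    simp only [Set.mem_setOf_eq, Set.mem_preimage, hco v]
  constructor
  · rw [hK, ← Homeomorph.preimage_interior, himg]
    rfl
  · rw [hK, ← Homeomorph.preimage_frontier, himg]
    rfl

/-- Convexity of the translated preimage. -/
lemma aux_convex {E : Type*} [NormedAddCommGroup E] [NormedSpace ℝ E]
    (P : Set E) (hP : Convex ℝ P) (x₀ : E) :
    Convex ℝ {v : (affineSpan ℝ P).direction | (v : E) + x₀ ∈ P} := by
  intro v hv w hw a b ha hb hab
  simp only [Set.mem_setOf_eq] at *
  have : ((a • v + b • w : (affineSpan ℝ P).direction) : E) + x₀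
      = a • ((v : E) + x₀) + b • ((w : E) + x₀) := by
    push_cast
    rw [smul_add, smul_add]
    have hx : (x₀ : E) = a • x₀ + b • x₀ := by rw [← add_smul, hab, one_smul]
    conv_lhs => rw [hx]
    abel
  rw [this]
  exact hP hv hw ha hb hab

/-- There is a point in `intrinsicInterior ℝ P ∩ Q`. -/
lemma aux_point {E : Type*} [NormedAddCommGroup E] [NormedSpace ℝ E] [FiniteDimensional ℝ E]
    (P Q : Set E) (hPconv : Convex ℝ P) (hQo : IsOpen Q)
    (hPQ : (P ∩ Q).Nonempty) : (intrinsicInterior ℝ P ∩ Q).Nonempty := by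
  obtain ⟨y, hyP, hyQ⟩ := hPQ
  obtain ⟨z, hz⟩ := Set.Nonempty.intrinsicInterior hPconv ⟨y, hyP⟩
  have hyspan : y ∈ affineSpan ℝ P := subset_affineSpan ℝ P hyP
  have hzP : z ∈ P := intrinsicInterior_subset hz
  obtain ⟨hint, _⟩ := aux_transfer P y hyspan
  set K : Set (affineSpan ℝ P).direction := {v | (v : E) + y ∈ P} with hKdef
  have hKconv : Convex ℝ K := aux_convex P hPconv y
  have hzV : z - y ∈ (affineSpan ℝ P).direction := by
    have := AffineSubspace.vsub_mem_direction (subset_affineSpan ℝ P hzP) hyspan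
    simpa using this
  set vz : (affineSpan ℝ P).direction := ⟨z - y, hzV⟩ with hvz
  have hvzint : vz ∈ interior K := by
    rw [hint]
    show (vz : E) + y ∈ intrinsicInterior ℝ P
    simp [hvz, sub_add_cancel, hz]
  have h0K : (0 : (affineSpan ℝ P).direction) ∈ K := by
    show ((0 : (affineSpan ℝ P).direction) : E) + y ∈ P
    simpa using hyP
  -- choose t small
  have hcont : Continuous (fun t : ℝ => t • (z - y) + y) := by fun_prop
  have h0 : (fun t : ℝ => t • (z - y) + y) 0 = y := by simp
  have hU : IsOpen ((fun t : ℝ => t • (z - y) + y) ⁻¹' Q) := hQo.preimage hcont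
  have h0U : (0 : ℝ) ∈ (fun t : ℝ => t • (z - y) + y) ⁻¹' Q := by
    simp [Set.mem_preimage, h0, hyQ]
  obtain ⟨ε, hε, hball⟩ := Metric.isOpen_iff.1 hU 0 h0U
  set t : ℝ := min (ε / 2) 1 with ht
  have ht0 : 0 < t := lt_min (by linarith) one_pos
  have ht1 : t ≤ 1 := min_le_right _ _
  have htQ : t • (z - y) + y ∈ Q := by
    apply hball
    simp only [Metric.mem_ball, Real.dist_eq, sub_zero]
    rw [abs_of_pos ht0]
    calc t ≤ ε / 2 := min_le_left _ _
    _ < ε := by linarith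
  refine ⟨t • (z - y) + y, ?_, htQ⟩
  have : t • vz ∈ interior K := by
    have := hKconv.combo_interior_self_mem_interior hvzint h0K ht0
      (sub_nonneg.2 ht1) (by ring : t + (1 - t) = 1)
    simpa using this
  rw [hint] at this
  simpa using this

/-- `A` is a strong deformation retract of `B`: `A ⊆ B` and there is a continuous
`H : B × [0,1] → B` with `H(b,0) = b`, `H(a,t) = a` for `a ∈ A`, and `H(b,1) ∈ A`. -/
def IsStrongDeformationRetract {E : Type*} [TopologicalSpace E] (A B : Set E) : Prop :=
  A ⊆ B ∧ ∃ H : C(↥B × ↥unitInterval, ↥B),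
    (∀ b : B, H (b, 0) = b) ∧
    (∀ b : B, (b : E) ∈ A → ∀ t, H (b, t) = b) ∧
    (∀ b : B, ((H (b, 1) : E) ∈ A))

/-- If `P ⊆ ℝ^d` is compact convex and `Q ⊆ ℝ^d` is open convex with `P ∩ Q ≠ ∅`,
then `(∂P) \ Q` is a strong deformation retract of `P \ Q`. -/
theorem statement0 {d : ℕ} (P Q : Set (EuclideanSpace ℝ (Fin d)))
    (hPc : IsCompact P) (hPconv : Convex ℝ P)
    (hQo : IsOpen Q) (hQconv : Convex ℝ Q)
    (hPQ : (P ∩ Q).Nonempty) :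
    IsStrongDeformationRetract (intrinsicFrontier ℝ P \ Q) (P \ Q) := by
  classical
  obtain ⟨x₀, hx₀i, hx₀Q⟩ := aux_point P Q hPconv hQo hPQ
  have hx₀P : x₀ ∈ P := intrinsicInterior_subset hx₀i
  have hx₀span : x₀ ∈ affineSpan ℝ P := subset_affineSpan ℝ P hx₀P
  obtain ⟨hint, hfront⟩ := aux_transfer P x₀ hx₀span
  set V := (affineSpan ℝ P).direction with hVdef
  set K : Set V := {v : V | (v : EuclideanSpace ℝ (Fin d)) + x₀ ∈ P} with hKdef
  have hKconv : Convex ℝ K := aux_convex P hPconv x₀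
  have hK0 : K ∈ 𝓝 (0 : V) := by
    have h0 : (0 : V) ∈ interior K := by
      rw [hKdef, hint]
      show ((0 : V) : EuclideanSpace ℝ (Fin d)) + x₀ ∈ intrinsicInterior ℝ P
      simpa using hx₀i
    exact mem_interior_iff_mem_nhds.1 h0
  have hKclosed : IsClosed K := by
    have hc : Continuous (fun v : V => (v : EuclideanSpace ℝ (Fin d)) + x₀) := by fun_prop
    exact hPc.isClosed.preimage hc
  have hKbdd : Bornology.IsVonNBounded ℝ K := by
    apply NormedSpace.isVonNBounded_of_isBounded
    obtain ⟨R, hR⟩ := hPc.isBounded.subset_closedBall x₀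
    apply (Metric.isBounded_closedBall (x := (0 : V)) (r := R)).subset
    intro v hv
    have h1 : dist ((v : EuclideanSpace ℝ (Fin d)) + x₀) x₀ ≤ R := hR hv
    rw [dist_eq_norm, add_sub_cancel_right] at h1
    simpa [Metric.mem_closedBall, dist_zero_right] using h1
  have habs : Absorbent ℝ K := absorbent_nhds_zero hK0
  have hVmem : ∀ b : EuclideanSpace ℝ (Fin d), b ∈ P → b - x₀ ∈ V := fun b hb => by
    simpa using AffineSubspace.vsub_mem_direction (subset_affineSpan ℝ P hb) hx₀span
  set w : (P \ Q : Set (EuclideanSpace ℝ (Fin d))) → V :=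
    fun b => ⟨(b : EuclideanSpace ℝ (Fin d)) - x₀, hVmem b b.2.1⟩ with hwdef
  have hwcoe : ∀ b, ((w b : V) : EuclideanSpace ℝ (Fin d)) = (b : EuclideanSpace ℝ (Fin d)) - x₀ :=
    fun b => by rw [hwdef]
  have hwK : ∀ b, w b ∈ K := by
    intro b
    show ((w b : V) : EuclideanSpace ℝ (Fin d)) + x₀ ∈ P
    rw [hwcoe b, sub_add_cancel]
    exact b.2.1
  have hg : ∀ b, 0 < gauge K (w b) := by
    intro b
    rw [gauge_pos habs hKbdd]
    intro h0
    have hco : (b : EuclideanSpace ℝ (Fin d)) - x₀ = 0 := by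
      rw [← hwcoe b, h0]; simp
    rw [sub_eq_zero] at hco
    exact b.2.2 (hco ▸ hx₀Q)
  have hg1 : ∀ b, gauge K (w b) ≤ 1 := fun b => gauge_le_one_of_mem (hwK b)
  have hginv : ∀ b, 1 ≤ (gauge K (w b))⁻¹ := by
    intro b
    nlinarith [mul_inv_cancel₀ (hg b).ne', inv_nonneg.2 (hg b).le,
      mul_nonneg (inv_nonneg.2 (hg b).le) (sub_nonneg.2 (hg1 b))]
  -- key membership lemma
  have hkey : ∀ (b : (P \ Q : Set (EuclideanSpace ℝ (Fin d)))) (s : ℝ), 1 ≤ s →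
      s ≤ (gauge K (w b))⁻¹ →
      s • ((b : EuclideanSpace ℝ (Fin d)) - x₀) + x₀ ∈ P \ Q := by
    intro b s hs1 hs2
    have hgpos := hg b
    constructor
    · have hsK : s • w b ∈ K := by
        rw [← hKclosed.closure_eq, ← gauge_le_one_iff_mem_closure hKconv hK0,
          gauge_smul_of_nonneg (by linarith : (0:ℝ) ≤ s), smul_eq_mul]
        have h2 : s * gauge K (w b) ≤ (gauge K (w b))⁻¹ * gauge K (w b) :=
          mul_le_mul_of_nonneg_right hs2 hgpos.le
        rwa [inv_mul_cancel₀ hgpos.ne'] at h2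
      have hmem : ((s • w b : V) : EuclideanSpace ℝ (Fin d)) + x₀ ∈ P := hsK
      rwa [SetLike.val_smul, hwcoe b] at hmem
    · intro hQmem
      have hs0 : 0 < s := lt_of_lt_of_le one_pos hs1
      have hinv1 : s⁻¹ ≤ 1 := by
        nlinarith [mul_inv_cancel₀ hs0.ne', inv_nonneg.2 hs0.le,
          mul_nonneg (inv_nonneg.2 hs0.le) (sub_nonneg.2 hs1)]
      have hmem := hQconv hQmem hx₀Q (inv_nonneg.2 hs0.le)
        (by linarith : (0:ℝ) ≤ 1 - s⁻¹) (by ring)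
      have heq : s⁻¹ • (s • ((b : EuclideanSpace ℝ (Fin d)) - x₀) + x₀) + (1 - s⁻¹) • x₀
          = (b : EuclideanSpace ℝ (Fin d)) := by
        rw [smul_add, smul_smul, inv_mul_cancel₀ hs0.ne', one_smul, sub_smul, one_smul]
        abel
      rw [heq] at hmem
      exact b.2.2 hmem
  -- the homotopy
  set σ : (P \ Q : Set (EuclideanSpace ℝ (Fin d))) × unitInterval → ℝ :=
    fun p => 1 + (p.2 : ℝ) * ((gauge K (w p.1))⁻¹ - 1) with hσdef
  have hσ1 : ∀ p, 1 ≤ σ p := by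
    intro p
    have := mul_nonneg p.2.2.1 (sub_nonneg.2 (hginv p.1))
    rw [hσdef]; dsimp only; linarith
  have hσ2 : ∀ p, σ p ≤ (gauge K (w p.1))⁻¹ := by
    intro p
    have h1 := mul_nonneg (sub_nonneg.2 p.2.2.2) (sub_nonneg.2 (hginv p.1))
    rw [hσdef]; dsimp only; nlinarith
  set f : (P \ Q : Set (EuclideanSpace ℝ (Fin d))) × unitInterval → EuclideanSpace ℝ (Fin d) :=
    fun p => σ p • ((p.1 : EuclideanSpace ℝ (Fin d)) - x₀) + x₀ with hfdef
  have hmemB : ∀ p, f p ∈ P \ Q := fun p => hkey p.1 (σ p) (hσ1 p) (hσ2 p)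
  have hwcont : Continuous (fun p : (P \ Q : Set (EuclideanSpace ℝ (Fin d))) × unitInterval =>
      w p.1) := by
    rw [hwdef]
    exact Continuous.subtype_mk ((continuous_subtype_val.comp continuous_fst).sub
      continuous_const) _
  have hgcont : Continuous (fun p : (P \ Q : Set (EuclideanSpace ℝ (Fin d))) × unitInterval =>
      gauge K (w p.1)) := (continuous_gauge hKconv hK0).comp hwcont
  have hσcont : Continuous σ := by
    rw [hσdef]
    exact continuous_const.add ((continuous_subtype_val.comp continuous_snd).mul
      ((hgcont.inv₀ (fun p => (hg p.1).ne')).sub continuous_const))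
  have hfcont : Continuous f := by
    rw [hfdef]
    exact (hσcont.smul ((continuous_subtype_val.comp continuous_fst).sub
      continuous_const)).add continuous_const
  refine ⟨Set.diff_subset_diff_left (intrinsicFrontier_subset hPc.isClosed),
    ⟨⟨fun p => ⟨f p, hmemB p⟩, hfcont.subtype_mk _⟩, ?_, ?_, ?_⟩⟩
  · -- H (b, 0) = b
    intro b
    apply Subtype.ext
    show f (b, 0) = (b : EuclideanSpace ℝ (Fin d))
    have hσ0 : σ (b, 0) = 1 := by rw [hσdef]; simp
    rw [hfdef]
    dsimp only
    rw [hσ0, one_smul, sub_add_cancel]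
  · -- fixed points
    intro b hb t
    apply Subtype.ext
    show f (b, t) = (b : EuclideanSpace ℝ (Fin d))
    have hbF : ((w b : V) : EuclideanSpace ℝ (Fin d)) + x₀ ∈ intrinsicFrontier ℝ P := by
      rw [hwcoe b, sub_add_cancel]; exact hb.1
    have hwf : w b ∈ frontier K := by rw [hfront]; exact hbF
    have hgeq : gauge K (w b) = 1 := (gauge_eq_one_iff_mem_frontier hKconv hK0).2 hwf
    have hσt : σ (b, t) = 1 := by rw [hσdef]; dsimp only; rw [hgeq]; simp
    rw [hfdef]
    dsimp only
    rw [hσt, one_smul, sub_add_cancel]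
  · -- H (b, 1) lands in the frontier
    intro b
    have hσeq : σ (b, 1) = (gauge K (w b))⁻¹ := by rw [hσdef]; simp
    have hgs : gauge K (σ (b, 1) • w b) = 1 := by
      rw [gauge_smul_of_nonneg (le_trans zero_le_one (hσ1 (b, 1))), smul_eq_mul, hσeq,
        inv_mul_cancel₀ (hg b).ne']
    have hsf := (gauge_eq_one_iff_mem_frontier hKconv hK0).1 hgs
    rw [hfront] at hsf
    simp only [Set.mem_setOf_eq, SetLike.val_smul, hwcoe b] at hsf
    show f (b, 1) ∈ intrinsicFrontier ℝ P \ Q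
    rw [hfdef]
    exact ⟨hsf, (hkey b (σ (b, 1)) (hσ1 (b, 1)) (le_of_eq hσeq)).2⟩
end

section
/- Let P ⊆ ℝ^d be a polytope and let φ_1, …, φ_k : ℝ^d → ℝ be affine functions such that Q := {v ∈ ℝ^d : φ_i(v) ≥ 0 for all i} is bounded. Then there exists a real number c > 0 such that for every ε with 0 < ε ≤ c, the set P \ Q_{>−ε} is a strong deformation retract of P \ Q, where Q_{>−ε} := {v ∈ ℝ^d : φ_i(v) > −ε for all i} is the ε-widening of Q with respect to the chosen inequalities. -/
/-- A polytope is the convex hull of a finite set of points. -/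
def IsPolytope {E : Type*} [AddCommGroup E] [Module ℝ E] (P : Set E) : Prop :=
  ∃ S : Finset E, P = convexHull ℝ (S : Set E)

private lemma cont_finset_sup' {X ι : Type*} [TopologicalSpace X] {s : Finset ι}
    (hs : s.Nonempty) (f : ι → X → ℝ) (hf : ∀ i, Continuous (f i)) :
    Continuous fun x => s.sup' hs (fun i => f i x) := by
  induction hs using Finset.Nonempty.cons_induction with
  | singleton a => simpa using hf a
  | cons a s ha hs ih =>
    have heq : ∀ x, (Finset.cons a s ha).sup' (Finset.cons_nonempty ha) (fun i => f i x)
        = f a x ⊔ s.sup' hs (fun i => f i x) := fun x => Finset.sup'_cons hs (fun i => f i x)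
    simp only [heq]
    exact (hf a).sup ih

set_option maxHeartbeats 1000000 in
theorem statement2_aux {d m : ℕ} (P : Set (EuclideanSpace ℝ (Fin d))) (hP : Convex ℝ P)
    (φ : Fin (m + 1) → (EuclideanSpace ℝ (Fin d) →ᵃ[ℝ] ℝ))
    (hB : (P \ {v : EuclideanSpace ℝ (Fin d) | ∀ i, 0 ≤ φ i v}).Nonempty) :
    ∃ c : ℝ, 0 < c ∧ ∀ ε : ℝ, 0 < ε → ε ≤ c →
      IsStrongDeformationRetract
        (P \ {v : EuclideanSpace ℝ (Fin d) | ∀ i, -ε < φ i v})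
        (P \ {v : EuclideanSpace ℝ (Fin d) | ∀ i, 0 ≤ φ i v}) := by
  classical
  set Q : Set (EuclideanSpace ℝ (Fin d)) := {v | ∀ i, 0 ≤ φ i v} with hQdef
  obtain ⟨x₀, hx₀P, hx₀Q⟩ := hB
  -- the "max violation" function
  set g : EuclideanSpace ℝ (Fin d) → ℝ :=
    fun x => Finset.univ.sup' Finset.univ_nonempty (fun i => -(φ i x)) with hgdef
  have hφcont : ∀ i : Fin (m + 1), Continuous (φ i) := fun i =>
    (φ i).continuous_of_finiteDimensional
  have hgcont : Continuous g := by
    rw [hgdef]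
    exact cont_finset_sup' Finset.univ_nonempty _ (fun i => (hφcont i).neg)
  have hle : ∀ x i, -(φ i x) ≤ g x := by
    intro x i; rw [hgdef]; exact Finset.le_sup' (fun j => -(φ j x)) (Finset.mem_univ i)
  have hex : ∀ x, ∃ i, g x = -(φ i x) := by
    intro x
    obtain ⟨i, -, hi⟩ := Finset.exists_mem_eq_sup'
      (Finset.univ_nonempty : (Finset.univ : Finset (Fin (m+1))).Nonempty) (fun i => -(φ i x))
    exact ⟨i, by rw [hgdef]; exact hi⟩
  have hgpos : ∀ x, x ∉ Q → 0 < g x := by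
    intro x hx
    rw [hQdef] at hx
    simp only [Set.mem_setOf_eq, not_forall, not_le] at hx
    obtain ⟨i, hi⟩ := hx
    exact lt_of_lt_of_le (by linarith) (hle x i)
  have hQg : ∀ x, 0 < g x → x ∉ Q := by
    intro x hgx hxQ
    rw [hQdef] at hxQ
    obtain ⟨i, hi⟩ := hex x
    have := hxQ i
    linarith [hi ▸ hgx]
  -- active index sets
  set As : EuclideanSpace ℝ (Fin d) → Finset (Fin (m + 1)) :=
    fun x => Finset.univ.filter (fun i => g x = -(φ i x)) with hAsdef
  have hAsne : ∀ x, (As x).Nonempty := by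
    intro x
    obtain ⟨i, hi⟩ := hex x
    exact ⟨i, by rw [hAsdef]; exact Finset.mem_filter.2 ⟨Finset.mem_univ i, hi⟩⟩
  have hAsval : ∀ x i, i ∈ As x → g x = -(φ i x) := by
    intro x i hi
    rw [hAsdef] at hi
    exact (Finset.mem_filter.1 hi).2
  have hAsof : ∀ x i, g x = -(φ i x) → i ∈ As x := by
    intro x i hi
    rw [hAsdef]
    exact Finset.mem_filter.2 ⟨Finset.mem_univ i, hi⟩
  -- good target points
  set GI : Finset (Fin (m + 1)) → Set (EuclideanSpace ℝ (Fin d)) :=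
    fun I => {p | p ∈ P ∧ ∀ i ∈ I, φ i p < 0} with hGIdef
  have hGIne : ∀ x, x ∈ P → x ∉ Q → (GI (As x)).Nonempty := by
    intro x hxP hxQ
    refine ⟨x, ?_⟩
    rw [hGIdef]
    refine ⟨hxP, fun i hi => ?_⟩
    have h1 := hAsval x i hi
    have h2 := hgpos x hxQ
    linarith
  set Φ : Finset (Fin (m + 1)) → EuclideanSpace ℝ (Fin d) :=
    fun I => if h : (GI I).Nonempty then h.choose else x₀ with hΦdef
  have hΦ : ∀ I, (h : (GI I).Nonempty) → Φ I ∈ P ∧ ∀ i ∈ I, φ i (Φ I) < 0 := by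
    intro I h
    have : Φ I = h.choose := by rw [hΦdef]; simp only [dif_pos h]
    rw [this]
    exact h.choose_spec
  -- the uniform constant κ0
  set 𝒮 : Finset (Finset (Fin (m + 1))) :=
    Finset.univ.filter (fun I => I.Nonempty ∧ (GI I).Nonempty) with h𝒮def
  have h𝒮mem : ∀ I, I.Nonempty → (GI I).Nonempty → I ∈ 𝒮 := by
    intro I h1 h2
    rw [h𝒮def]
    exact Finset.mem_filter.2 ⟨Finset.mem_univ _, h1, h2⟩
  have h𝒮ne : 𝒮.Nonempty := ⟨As x₀, h𝒮mem _ (hAsne x₀) (hGIne x₀ hx₀P hx₀Q)⟩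
  set κf : Finset (Fin (m + 1)) → ℝ :=
    fun I => if h : I.Nonempty then I.inf' h (fun i => -(φ i (Φ I))) else 1 with hκfdef
  set κ0 : ℝ := 𝒮.inf' h𝒮ne κf with hκ0def
  have hκ0pos : 0 < κ0 := by
    rw [hκ0def]
    refine (Finset.lt_inf'_iff h𝒮ne).2 fun I hI => ?_
    rw [h𝒮def] at hI
    obtain ⟨-, hIne, hGIne'⟩ := Finset.mem_filter.1 hI
    rw [hκfdef]
    simp only [dif_pos hIne]
    refine (Finset.lt_inf'_iff hIne).2 fun i hi => ?_
    have := (hΦ I hGIne').2 i hi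
    linarith
  have hκ0key : ∀ x, x ∈ P → x ∉ Q → ∀ i ∈ As x, φ i (Φ (As x)) ≤ -κ0 := by
    intro x hxP hxQ i hi
    have h1 : κ0 ≤ κf (As x) := by
      rw [hκ0def]
      exact Finset.inf'_le _ (h𝒮mem _ (hAsne x) (hGIne x hxP hxQ))
    rw [hκfdef] at h1
    simp only [dif_pos (hAsne x)] at h1
    have h2 : (As x).inf' (hAsne x) (fun j => -(φ j (Φ (As x)))) ≤ -(φ i (Φ (As x))) :=
      Finset.inf'_le _ hi
    linarith
  have hΦP : ∀ x, x ∈ P → x ∉ Q → Φ (As x) ∈ P := fun x hxP hxQ => (hΦ _ (hGIne x hxP hxQ)).1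
  -- conclusion
  refine ⟨κ0 / 2, by linarith, ?_⟩
  intro ε hε hεc
  have hsub : (P \ {v | ∀ i, -ε < φ i v}) ⊆ P \ Q := by
    intro x hx
    refine ⟨hx.1, fun hxQ => hx.2 ?_⟩
    rw [hQdef] at hxQ
    simp only [Set.mem_setOf_eq]
    intro i
    have := hxQ i
    linarith
  refine ⟨hsub, ?_⟩
  -- open cover of B := P \ Q
  set V : ↥(P \ Q) → Set (EuclideanSpace ℝ (Fin d)) :=
    fun b => ⋂ i ∈ Finset.univ \ As (b : EuclideanSpace ℝ (Fin d)), {x | -(φ i x) < g x}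
    with hVdef
  have hVopen : ∀ b, IsOpen (V b) := by
    intro b
    rw [hVdef]
    exact isOpen_biInter_finset fun i _ => isOpen_lt (hφcont i).neg hgcont
  have hVself : ∀ b : ↥(P \ Q), (b : EuclideanSpace ℝ (Fin d)) ∈ V b := by
    intro b
    rw [hVdef]
    refine Set.mem_iInter₂.2 fun i hi => ?_
    have hi' : i ∉ As (b : EuclideanSpace ℝ (Fin d)) := (Finset.mem_sdiff.1 hi).2
    have h1 := hle (b : EuclideanSpace ℝ (Fin d)) i
    have h2 : g (b : EuclideanSpace ℝ (Fin d)) ≠ -(φ i b) := fun h => hi' (hAsof _ _ h)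
    simp only [Set.mem_setOf_eq]
    exact lt_of_le_of_ne h1 (fun h => h2 h.symm)
  have hVsub : ∀ (b : ↥(P \ Q)) (x : EuclideanSpace ℝ (Fin d)), x ∈ V b →
      As x ⊆ As (b : EuclideanSpace ℝ (Fin d)) := by
    intro b x hx i hi
    by_contra hni
    rw [hVdef] at hx
    have h1 : x ∈ {y | -(φ i y) < g y} :=
      Set.mem_iInter₂.1 hx i (Finset.mem_sdiff.2 ⟨Finset.mem_univ _, hni⟩)
    have h2 := hAsval x i hi
    simp only [Set.mem_setOf_eq] at h1
    linarith [h2 ▸ h1]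
  obtain ⟨f, hf⟩ := PartitionOfUnity.exists_isSubordinate
    (s := (Set.univ : Set ↥(P \ Q))) isClosed_univ
    (fun b => Subtype.val ⁻¹' V b)
    (fun b => (hVopen b).preimage continuous_subtype_val)
    (fun x _ => Set.mem_iUnion.2 ⟨x, hVself x⟩)
  -- the target map
  set T : ↥(P \ Q) → EuclideanSpace ℝ (Fin d) :=
    fun x => ∑ᶠ b : ↥(P \ Q), f b x • Φ (As (b : EuclideanSpace ℝ (Fin d))) with hTdef
  have hTcont : Continuous T := by
    rw [hTdef]
    exact PartitionOfUnity.IsSubordinate.continuous_finsum_smul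
      (fun b => (hVopen b).preimage continuous_subtype_val) hf
      (g := fun b _ => Φ (As (b : EuclideanSpace ℝ (Fin d))))
      (fun b => continuousOn_const)
  have hTmem : ∀ x : ↥(P \ Q), T x ∈ P ∧
      ∀ i ∈ As (x : EuclideanSpace ℝ (Fin d)), φ i (T x) ≤ -κ0 := by
    intro x
    have hD : Convex ℝ (P ∩ ⋂ i ∈ As (x : EuclideanSpace ℝ (Fin d)),
        (φ i) ⁻¹' Set.Iic (-κ0)) :=
      hP.inter (convex_iInter₂ fun i _ => (convex_Iic _).affine_preimage (φ i))
    have hmem : T x ∈ P ∩ ⋂ i ∈ As (x : EuclideanSpace ℝ (Fin d)),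
        (φ i) ⁻¹' Set.Iic (-κ0) := by
      rw [hTdef]
      refine hD.finsum_mem (fun b => f.nonneg b x) (f.sum_eq_one (Set.mem_univ x)) ?_
      intro b hb
      have hxU : x ∈ Subtype.val ⁻¹' V b := hf b (subset_tsupport _ (Function.mem_support.2 hb))
      have hsub' := hVsub b _ hxU
      have hbP := (b.2 : (b : EuclideanSpace ℝ (Fin d)) ∈ P \ Q)
      refine ⟨hΦP _ hbP.1 hbP.2, Set.mem_iInter₂.2 fun i hi => ?_⟩
      exact hκ0key _ hbP.1 hbP.2 i (hsub' hi)
    exact ⟨hmem.1, fun i hi => Set.mem_iInter₂.1 hmem.2 i hi⟩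
  -- the speed function
  set sε : ↥(P \ Q) → ℝ :=
    fun x => (ε - min (g (x : EuclideanSpace ℝ (Fin d))) ε) /
      (κ0 - min (g (x : EuclideanSpace ℝ (Fin d))) ε) with hsεdef
  have hden : ∀ x : ↥(P \ Q), 0 < κ0 - min (g (x : EuclideanSpace ℝ (Fin d))) ε := by
    intro x
    have := min_le_right (g (x : EuclideanSpace ℝ (Fin d))) ε
    linarith
  have hs0 : ∀ x, 0 ≤ sε x := by
    intro x
    rw [hsεdef]
    exact div_nonneg (by linarith [min_le_right (g (x : EuclideanSpace ℝ (Fin d))) ε])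
      (le_of_lt (hden x))
  have hs1 : ∀ x, sε x ≤ 1 := by
    intro x
    rw [hsεdef]
    exact (div_le_one (hden x)).2 (by linarith)
  have hscont : Continuous sε := by
    rw [hsεdef]
    exact Continuous.div
      (continuous_const.sub ((hgcont.comp continuous_subtype_val).min continuous_const))
      (continuous_const.sub ((hgcont.comp continuous_subtype_val).min continuous_const))
      (fun x => ne_of_gt (hden x))
  -- key estimates along the segment
  have hval : ∀ (x : ↥(P \ Q)) (σ : ℝ), 0 ≤ σ → σ ≤ 1 →
      ∀ i ∈ As (x : EuclideanSpace ℝ (Fin d)),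
      φ i (AffineMap.lineMap (x : EuclideanSpace ℝ (Fin d)) (T x) σ) ≤
        -((1 - σ) * g (x : EuclideanSpace ℝ (Fin d)) + σ * κ0) := by
    intro x σ h0 h1 i hi
    have h2 : φ i (AffineMap.lineMap (x : EuclideanSpace ℝ (Fin d)) (T x) σ) =
        AffineMap.lineMap (φ i (x : EuclideanSpace ℝ (Fin d))) (φ i (T x)) σ :=
      AffineMap.apply_lineMap (φ i) _ _ _
    rw [h2, AffineMap.lineMap_apply_module']
    have hφx : φ i (x : EuclideanSpace ℝ (Fin d)) = -(g (x : EuclideanSpace ℝ (Fin d))) := by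
      have := hAsval _ i hi; linarith
    have hφT : φ i (T x) ≤ -κ0 := (hTmem x).2 i hi
    rw [smul_eq_mul, hφx]
    nlinarith [mul_le_mul_of_nonneg_left hφT h0]
  have hgF : ∀ (x : ↥(P \ Q)) (σ : ℝ), 0 ≤ σ → σ ≤ 1 →
      (1 - σ) * g (x : EuclideanSpace ℝ (Fin d)) + σ * κ0 ≤
        g (AffineMap.lineMap (x : EuclideanSpace ℝ (Fin d)) (T x) σ) := by
    intro x σ h0 h1
    obtain ⟨i, hi⟩ := hAsne (x : EuclideanSpace ℝ (Fin d))
    have h2 := hval x σ h0 h1 i hi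
    have h3 := hle (AffineMap.lineMap (x : EuclideanSpace ℝ (Fin d)) (T x) σ) i
    linarith
  -- the homotopy
  set F : ↥(P \ Q) × ↥unitInterval → EuclideanSpace ℝ (Fin d) :=
    fun p => AffineMap.lineMap (p.1 : EuclideanSpace ℝ (Fin d)) (T p.1)
      ((p.2 : ℝ) * sε p.1) with hFdef
  have hσ01 : ∀ p : ↥(P \ Q) × ↥unitInterval,
      0 ≤ (p.2 : ℝ) * sε p.1 ∧ (p.2 : ℝ) * sε p.1 ≤ 1 := by
    intro p
    constructor
    · exact mul_nonneg p.2.2.1 (hs0 p.1)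
    · nlinarith [p.2.2.1, p.2.2.2, hs0 p.1, hs1 p.1]
  have hFmem : ∀ p, F p ∈ P \ Q := by
    intro p
    obtain ⟨h0, h1⟩ := hσ01 p
    rw [hFdef]
    have hbP := (p.1.2 : (p.1 : EuclideanSpace ℝ (Fin d)) ∈ P \ Q)
    constructor
    · exact hP.lineMap_mem hbP.1 (hTmem p.1).1 ⟨h0, h1⟩
    · apply hQg
      have hgF' := hgF p.1 _ h0 h1
      have hgp := hgpos _ hbP.2
      nlinarith [mul_nonneg (sub_nonneg.2 h1)
          (sub_nonneg.2 (min_le_left (g (p.1 : EuclideanSpace ℝ (Fin d))) κ0)),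
        mul_nonneg h0
          (sub_nonneg.2 (min_le_right (g (p.1 : EuclideanSpace ℝ (Fin d))) κ0)),
        lt_min hgp hκ0pos]
  have hFcont : Continuous F := by
    have hFeq : F = fun p : ↥(P \ Q) × ↥unitInterval =>
        ((p.2 : ℝ) * sε p.1) • (T p.1 - (p.1 : EuclideanSpace ℝ (Fin d))) +
          (p.1 : EuclideanSpace ℝ (Fin d)) := by
      funext p
      rw [hFdef]
      exact AffineMap.lineMap_apply_module' _ _ _
    rw [hFeq]
    exact (((continuous_subtype_val.comp continuous_snd).mul
        (hscont.comp continuous_fst)).smul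
        ((hTcont.comp continuous_fst).sub (continuous_subtype_val.comp continuous_fst))).add
      (continuous_subtype_val.comp continuous_fst)
  have hone : ((1 : ↥unitInterval) : ℝ) = 1 := rfl
  have hzero : ((0 : ↥unitInterval) : ℝ) = 0 := rfl
  refine ⟨⟨fun p => ⟨F p, hFmem p⟩, hFcont.subtype_mk _⟩, ?_, ?_, ?_⟩
  · intro b
    apply Subtype.ext
    show F (b, 0) = (b : EuclideanSpace ℝ (Fin d))
    rw [hFdef]
    simp only [hzero, zero_mul, AffineMap.lineMap_apply_zero]
  · intro b hb t
    apply Subtype.ext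
    show F (b, t) = (b : EuclideanSpace ℝ (Fin d))
    have hεg : ε ≤ g (b : EuclideanSpace ℝ (Fin d)) := by
      have h2 := hb.2
      simp only [Set.mem_setOf_eq, not_forall, not_lt] at h2
      obtain ⟨i, hi⟩ := h2
      linarith [hle (b : EuclideanSpace ℝ (Fin d)) i]
    have hsz : sε b = 0 := by
      rw [hsεdef]
      simp only [min_eq_right hεg, sub_self, zero_div]
    rw [hFdef]
    simp only [hsz, mul_zero, AffineMap.lineMap_apply_zero]
  · intro b
    have hbP := (b.2 : (b : EuclideanSpace ℝ (Fin d)) ∈ P \ Q)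
    obtain ⟨i, hi⟩ := hAsne (b : EuclideanSpace ℝ (Fin d))
    have hkey : φ i (F (b, 1)) ≤ -ε := by
      rcases le_or_gt ε (g (b : EuclideanSpace ℝ (Fin d))) with hca | hca
      · have hsz : sε b = 0 := by
          rw [hsεdef]
          simp only [min_eq_right hca, sub_self, zero_div]
        have hFb : F (b, 1) = (b : EuclideanSpace ℝ (Fin d)) := by
          rw [hFdef]
          simp only [hsz, mul_zero, AffineMap.lineMap_apply_zero]
        rw [hFb]
        have := hAsval _ i hi
        linarith
      · have hmin : min (g (b : EuclideanSpace ℝ (Fin d))) ε =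
            g (b : EuclideanSpace ℝ (Fin d)) := min_eq_left hca.le
        have hgκ : g (b : EuclideanSpace ℝ (Fin d)) < κ0 := by linarith
        have hse : sε b * (κ0 - g (b : EuclideanSpace ℝ (Fin d))) =
            ε - g (b : EuclideanSpace ℝ (Fin d)) := by
          rw [hsεdef]
          simp only [hmin]
          exact div_mul_cancel₀ _ (by linarith)
        have hF1 : F (b, 1) =
            AffineMap.lineMap (b : EuclideanSpace ℝ (Fin d)) (T b) (sε b) := by
          rw [hFdef]
          simp only [hone, one_mul]
        have h2 := hval b (sε b) (hs0 b) (hs1 b) i hi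
        rw [hF1]
        nlinarith [h2, hse]
    refine ⟨(hFmem (b, 1)).1, ?_⟩
    intro hall
    simp only [Set.mem_setOf_eq] at hall
    have := hall i
    show False
    exact absurd hkey (not_le.2 (by exact this))
  
set_option maxHeartbeats 1000000 in
/-- If `P` is a polytope and `Q = {v | ∀ i, φ i v ≥ 0}` is bounded (for affine
functions `φ i`), then there is `c > 0` such that for all `0 < ε ≤ c`, the set
`P \ Q_{>-ε}` is a strong deformation retract of `P \ Q`, where
`Q_{>-ε} = {v | ∀ i, φ i v > -ε}` is the ε-widening of `Q`. -/
theorem statement2 {d k : ℕ} (P : Set (EuclideanSpace ℝ (Fin d))) (hP : IsPolytope P)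
    (φ : Fin k → (EuclideanSpace ℝ (Fin d) →ᵃ[ℝ] ℝ))
    (hQbdd : Bornology.IsBounded {v : EuclideanSpace ℝ (Fin d) | ∀ i, 0 ≤ φ i v}) :
    ∃ c : ℝ, 0 < c ∧ ∀ ε : ℝ, 0 < ε → ε ≤ c →
      IsStrongDeformationRetract
        (P \ {v : EuclideanSpace ℝ (Fin d) | ∀ i, -ε < φ i v})
        (P \ {v : EuclideanSpace ℝ (Fin d) | ∀ i, 0 ≤ φ i v}) := by
  classical
  by_cases hB : (P \ {v : EuclideanSpace ℝ (Fin d) | ∀ i, 0 ≤ φ i v}).Nonempty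
  · rcases Nat.eq_zero_or_pos k with hk | hk
    · exfalso
      obtain ⟨x, -, hx⟩ := hB
      subst hk
      exact hx (fun i => i.elim0)
    · obtain ⟨m, rfl⟩ : ∃ m, k = m + 1 := ⟨k - 1, (Nat.succ_pred_eq_of_pos hk).symm⟩
      obtain ⟨S, hS⟩ := hP
      exact statement2_aux P (hS ▸ convex_convexHull ℝ _) φ hB
  · refine ⟨1, one_pos, fun ε hε hε1 => ⟨?_, ⟨⟨fun p => p.1, continuous_fst⟩,
      fun b => rfl, fun b _ _ => rfl, fun b => ?_⟩⟩⟩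
    · intro x hx
      refine ⟨hx.1, fun hxQ => hx.2 ?_⟩
      simp only [Set.mem_setOf_eq] at hxQ ⊢
      intro i
      have := hxQ i
      linarith
    · exact absurd ⟨(b : EuclideanSpace ℝ (Fin d)), b.2⟩ hB
end

section
/- Let 0 ≤ d ≤ n be integers, let ρ : ℤⁿ → ℤ^d be a surjective group homomorphism, let K := ker ρ, and let c₁, …, c_{n−d} be any ℤ-basis of K. Let A be the d×d integer matrix whose j-th column is ρ(e_j) for j = 1, …, d (where e₁, …, e_n is the standard basis of ℤⁿ), and let B be the (n−d)×(n−d) integer matrix with entries B_{j,m} := (c_m)_{d+j}, the (d+j)-th coordinate of c_m, for j, m = 1, …, n−d. Then det A = det B or det A = −det B (the two determinants agree up to sign). -/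
/-!
A section of `ρ` splits `ℤⁿ ≅ K × ℤᵈ`, so the basis `c` of `K` together with lifts of the
standard basis of `ℤᵈ` is a basis `β` of `ℤⁿ` in which the last `d` coordinates of `x` are
those of `ρ x`. The family `(c₁, …, c_{n-d}, e₁, …, e_d)` is block triangular both in `β`,
with determinant `det A`, and in the standard basis, with determinant `det B`; two bases of a
free `ℤ`-module differ by a change of basis of determinant `±1`.
-/

open Module

namespace Module.Basis

variable {R M : Type*} [CommRing R] [AddCommGroup M] [Module R M] {ι κ : Type*}

theorem exists_basis_sum_of_surjective {N : Type*} [AddCommGroup N] [Module R N]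
    {ρ : M →ₗ[R] N} (hρ : Function.Surjective ρ)
    (b : Basis κ R (LinearMap.ker ρ)) (c : Basis ι R N) :
    ∃ β : Basis (κ ⊕ ι) R M,
      (∀ k, β (.inl k) = b k) ∧ ∀ x i, β.repr x (.inr i) = c.repr (ρ x) i := by
  have := Module.Projective.of_basis c
  obtain ⟨σ, hσ⟩ := ρ.exists_rightInverse_of_surjective (LinearMap.range_eq_top.2 hρ)
  let e := (LinearMap.exact_subtype_ker_map ρ).splitSurjectiveEquiv
    (Submodule.injective_subtype _) ⟨σ, hσ⟩
  refine ⟨(b.prod c).map e.1.symm, fun k => ?_, fun x i => ?_⟩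
  · simpa using (LinearMap.congr_fun e.2.1 (b k)).symm
  · simp [LinearMap.congr_fun e.2.2 x, prod_repr_inr]

variable [Fintype ι] [Fintype κ] [DecidableEq ι] [DecidableEq κ]

theorem det_eq_det_of_eq_inl (β : Basis (κ ⊕ ι) R M) {v : κ ⊕ ι → M}
    (hv : ∀ k, v (.inl k) = β (.inl k)) :
    β.det v = (Matrix.of fun i j => β.repr (v (.inr j)) (.inr i)).det := by
  have hblocks : β.toMatrix v = Matrix.fromBlocks 1
      (Matrix.of fun k j => β.repr (v (.inr j)) (.inl k)) 0
      (Matrix.of fun i j => β.repr (v (.inr j)) (.inr i)) := by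
    ext (k | i) (k' | j) <;>
      simp [toMatrix_apply, hv, Finsupp.single_apply, Matrix.one_apply, eq_comm]
  rw [det_apply, hblocks, Matrix.det_fromBlocks_zero₂₁, Matrix.det_one, one_mul]

theorem det_eq_det_of_eq_inr (β : Basis (κ ⊕ ι) R M) {v : κ ⊕ ι → M}
    (hv : ∀ i, v (.inr i) = β (.inr i)) :
    β.det v = (Matrix.of fun k j => β.repr (v (.inl j)) (.inl k)).det := by
  have hblocks : β.toMatrix v = Matrix.fromBlocks
      (Matrix.of fun k j => β.repr (v (.inl j)) (.inl k)) 0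
      (Matrix.of fun i j => β.repr (v (.inl j)) (.inr i)) 1 := by
    ext (k | i) (k' | j) <;>
      simp [toMatrix_apply, hv, Finsupp.single_apply, Matrix.one_apply, eq_comm]
  rw [det_apply, hblocks, Matrix.det_fromBlocks_zero₁₂, Matrix.det_one, mul_one]

theorem det_eq_or_eq_neg_of_int {M : Type*} [AddCommGroup M] (e e' : Basis ι ℤ M) (v : ι → M) :
    e.det v = e'.det v ∨ e.det v = -e'.det v := by
  rw [e.det.eq_smul_basis_det e', AlternatingMap.smul_apply, smul_eq_mul]
  rcases Int.isUnit_iff.1 (e.isUnit_det e') with h | h <;> simp [h]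

end Module.Basis

/-- Gale duality spots determinants: given a surjection `ρ : ℤⁿ → ℤ^d` with kernel `K`
and a `ℤ`-basis `b` of `K`, the determinant of the `d×d` matrix whose columns are the
images `ρ(e_j)` of the first `d` standard basis vectors agrees up to sign with the
determinant of the `(n-d)×(n-d)` matrix of the last `n-d` coordinates of the basis
vectors of `K`. -/
theorem statement7 {n d : ℕ} (h : d ≤ n)
    (ρ : (Fin n → ℤ) →ₗ[ℤ] (Fin d → ℤ)) (hρ : Function.Surjective ρ)
    (b : Module.Basis (Fin (n - d)) ℤ (LinearMap.ker ρ)) :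
    (Matrix.of fun i j : Fin d => ρ (Pi.single (Fin.castLE h j) 1) i).det =
      (Matrix.of fun j m : Fin (n - d) =>
        (b m : Fin n → ℤ) (Fin.cast (by omega) (Fin.natAdd d j))).det ∨
    (Matrix.of fun i j : Fin d => ρ (Pi.single (Fin.castLE h j) 1) i).det =
      -(Matrix.of fun j m : Fin (n - d) =>
        (b m : Fin n → ℤ) (Fin.cast (by omega) (Fin.natAdd d j))).det := by
  obtain ⟨β, hβ_ker, hβ_repr⟩ :=
    Basis.exists_basis_sum_of_surjective hρ b (Pi.basisFun ℤ (Fin d))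
  let split : Fin (n - d) ⊕ Fin d ≃ Fin n :=
    (Equiv.sumComm _ _).trans (finSumFinEquiv.trans (finCongr (Nat.add_sub_of_le h)))
  let std := (Pi.basisFun ℤ (Fin n)).reindex split.symm
  let v : Fin (n - d) ⊕ Fin d → Fin n → ℤ :=
    Sum.elim (fun m => b m) (fun j => Pi.single (Fin.castLE h j) 1)
  have hA : β.det v = (Matrix.of fun i j : Fin d => ρ (Pi.single (Fin.castLE h j) 1) i).det := by
    rw [β.det_eq_det_of_eq_inl fun m => (hβ_ker m).symm]
    simp [v, hβ_repr]
  have hB : std.det v = (Matrix.of fun j m : Fin (n - d) =>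
      (b m : Fin n → ℤ) (Fin.cast (by omega) (Fin.natAdd d j))).det := by
    rw [std.det_eq_det_of_eq_inr fun j => ?_]
    · simp only [std, v, split, Basis.repr_reindex_apply, Equiv.symm_symm, Pi.basisFun_repr]
      rfl
    · simp only [std, v, split, Basis.reindex_apply, Equiv.symm_symm, Pi.basisFun_apply]
      rfl
  rw [← hA, ← hB]
  exact β.det_eq_or_eq_neg_of_int std v
end

section
/- With the notation of the context, the four maculate regions are: ℳ_ℝ(∅) = {(x,y) ∈ ℝ² : y ≥ 0 and x ≥ c^{ℓ₂}·y}; ℳ_ℝ(U) = {(x,y) ∈ ℝ² : y ≥ 0 and x ≤ −ℓ₁}; ℳ_ℝ(V) = {(x,y) ∈ ℝ² : y ≤ −ℓ₂ and x ≥ −ĉ}; and ℳ_ℝ(U∪V) = {(x,y) ∈ ℝ² : y ≤ −ℓ₂ and x ≤ −ĉ − ℓ₁ + c^{ℓ₂}·(y + ℓ₂)}. -/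
open scoped BigOperators

lemma sum_update_base {n : ℕ} (a : ℝ) (k : Fin n) (v : ℝ) :
    ∑ j, Function.update (fun _ => a) k v j = v + ((n : ℝ) - 1) * a := by
  classical
  simp only [Function.update_apply]
  rw [Finset.sum_congr rfl (fun j _ => show (if j = k then v else a)
      = (if j = k then v - a else 0) + a by split <;> ring)]
  rw [Finset.sum_add_distrib, Finset.sum_ite_eq' Finset.univ k]
  simp [Finset.card_univ, nsmul_eq_mul]
  ring

lemma sum_mul_update_base {n : ℕ} (c : Fin n → ℤ) (a : ℝ) (k : Fin n) (v : ℝ) :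
    ∑ j, (c j : ℝ) * Function.update (fun _ => a) k v j
      = (c k : ℝ) * (v - a) + a * ∑ j, (c j : ℝ) := by
  classical
  simp only [Function.update_apply]
  rw [Finset.sum_congr rfl (fun j _ => show (c j : ℝ) * (if j = k then v else a)
      = (if j = k then (c j : ℝ) * (v - a) else 0) + (c j : ℝ) * a by split <;> ring)]
  rw [Finset.sum_add_distrib, Finset.sum_ite_eq' Finset.univ k]
  rw [← Finset.sum_mul]
  simp [mul_comm]


/-- The class map `π : ℝ^{ℓ₁} × ℝ^{ℓ₂} → ℝ²` for the Picard-rank-2 data `(ℓ₁, ℓ₂, c)`. -/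
noncomputable def picTwoPiR (ℓ₁ ℓ₂ : ℕ) (c : Fin ℓ₂ → ℤ)
    (x : Fin ℓ₁ ⊕ Fin ℓ₂ → ℝ) : ℝ × ℝ :=
  ((∑ i, x (Sum.inl i)) + ∑ j, (c j : ℝ) * x (Sum.inr j), ∑ j, x (Sum.inr j))

/-- The real maculate region `ℳ_ℝ(R)` associated to a subset `R` of the coordinates. -/
noncomputable def picTwoMacR (ℓ₁ ℓ₂ : ℕ) (c : Fin ℓ₂ → ℤ)
    (R : Set (Fin ℓ₁ ⊕ Fin ℓ₂)) : Set (ℝ × ℝ) :=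
  picTwoPiR ℓ₁ ℓ₂ c ''
    {x | (∀ ρ ∈ R, x ρ ≤ -1) ∧ ∀ ρ ∉ R, 0 ≤ x ρ}

/-- The four maculate regions of a smooth complete toric variety of Picard rank 2:
`ℳ_ℝ(∅)`, `ℳ_ℝ(U)`, `ℳ_ℝ(V)`, `ℳ_ℝ(U ∪ V)` are given by the explicit inequalities. -/
theorem statement8 (ℓ₁ ℓ₂ : ℕ) (h1 : 2 ≤ ℓ₁) (h2 : 2 ≤ ℓ₂)
    (c : Fin ℓ₂ → ℤ) (hc0 : c ⟨0, by omega⟩ = 0) (hmono : Antitone c) :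
    picTwoMacR ℓ₁ ℓ₂ c ∅ =
      {p : ℝ × ℝ | 0 ≤ p.2 ∧ (c ⟨ℓ₂ - 1, by omega⟩ : ℝ) * p.2 ≤ p.1} ∧
    picTwoMacR ℓ₁ ℓ₂ c (Set.range Sum.inl) =
      {p : ℝ × ℝ | 0 ≤ p.2 ∧ p.1 ≤ -(ℓ₁ : ℝ)} ∧
    picTwoMacR ℓ₁ ℓ₂ c (Set.range Sum.inr) =
      {p : ℝ × ℝ | p.2 ≤ -(ℓ₂ : ℝ) ∧ -((∑ ν, c ν : ℤ) : ℝ) ≤ p.1} ∧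
    picTwoMacR ℓ₁ ℓ₂ c (Set.range Sum.inl ∪ Set.range Sum.inr) =
      {p : ℝ × ℝ | p.2 ≤ -(ℓ₂ : ℝ) ∧
        p.1 ≤ -((∑ ν, c ν : ℤ) : ℝ) - (ℓ₁ : ℝ) +
          (c ⟨ℓ₂ - 1, by omega⟩ : ℝ) * (p.2 + (ℓ₂ : ℝ))} := by
  have hL2 : ℓ₂ - 1 < ℓ₂ := by omega
  have h02 : 0 < ℓ₂ := by omega
  have h01 : 0 < ℓ₁ := by omega
  set L : Fin ℓ₂ := ⟨ℓ₂ - 1, hL2⟩ with hLdef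
  set O₂ : Fin ℓ₂ := ⟨0, h02⟩ with hO2def
  set O₁ : Fin ℓ₁ := ⟨0, h01⟩ with hO1def
  have hcL : ∀ j : Fin ℓ₂, c L ≤ c j := fun j => hmono (by
    rw [Fin.le_def]; have := j.2; simp only [hLdef]; omega)
  have hcnp : ∀ j : Fin ℓ₂, c j ≤ 0 := fun j => by
    have : c j ≤ c O₂ := hmono (by rw [Fin.le_def]; exact Nat.zero_le _)
    have h0 : c O₂ = 0 := hc0
    omega
  have hcast : ((∑ ν, c ν : ℤ) : ℝ) = ∑ ν, (c ν : ℝ) := by push_cast; rfl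
  refine ⟨?_, ?_, ?_, ?_⟩
  · -- R = ∅
    ext p
    constructor
    · rintro ⟨x, ⟨-, hge⟩, rfl⟩
      simp only [Set.mem_setOf_eq, picTwoPiR]
      have hB : 0 ≤ ∑ j, x (Sum.inr j) :=
        Finset.sum_nonneg fun j _ => hge _ (Set.notMem_empty _)
      refine ⟨hB, ?_⟩
      have hA : 0 ≤ ∑ i, x (Sum.inl i) :=
        Finset.sum_nonneg fun i _ => hge _ (Set.notMem_empty _)
      have hC : ∑ j, (c L : ℝ) * x (Sum.inr j) ≤ ∑ j, (c j : ℝ) * x (Sum.inr j) :=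
        Finset.sum_le_sum fun j _ => mul_le_mul_of_nonneg_right
          (by exact_mod_cast hcL j) (hge _ (Set.notMem_empty _))
      rw [← Finset.mul_sum] at hC
      linarith
    · rintro ⟨hy, hx⟩
      refine ⟨Sum.elim (Function.update (fun _ => (0:ℝ)) O₁ (p.1 - (c L : ℝ) * p.2))
        (Function.update (fun _ => (0:ℝ)) L p.2),
        ⟨fun ρ hρ => absurd hρ (Set.notMem_empty ρ), ?_⟩, ?_⟩
      · intro ρ _
        rcases ρ with i | j <;>
          simp only [Sum.elim_inl, Sum.elim_inr, Function.update_apply] <;>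
          split <;> first | linarith | norm_num
      · simp only [picTwoPiR, Sum.elim_inl, Sum.elim_inr]
        rw [sum_update_base, sum_update_base, sum_mul_update_base, Prod.ext_iff]
        constructor <;> simp <;> ring
  · -- R = range inl
    ext p
    constructor
    · rintro ⟨x, ⟨hle, hge⟩, rfl⟩
      simp only [Set.mem_setOf_eq, picTwoPiR]
      have hB : 0 ≤ ∑ j, x (Sum.inr j) :=
        Finset.sum_nonneg fun j _ => hge _ (by simp)
      refine ⟨hB, ?_⟩
      have hA : ∑ i, x (Sum.inl i) ≤ -(ℓ₁ : ℝ) := by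
        calc ∑ i, x (Sum.inl i) ≤ ∑ _i : Fin ℓ₁, (-1 : ℝ) :=
              Finset.sum_le_sum fun i _ => hle _ ⟨i, rfl⟩
        _ = -(ℓ₁ : ℝ) := by simp
      have hC : ∑ j, (c j : ℝ) * x (Sum.inr j) ≤ 0 :=
        Finset.sum_nonpos fun j _ => mul_nonpos_of_nonpos_of_nonneg
          (by exact_mod_cast hcnp j) (hge _ (by simp))
      linarith
    · rintro ⟨hy, hx⟩
      refine ⟨Sum.elim (Function.update (fun _ => (-1:ℝ)) O₁ (p.1 + (ℓ₁ : ℝ) - 1))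
        (Function.update (fun _ => (0:ℝ)) O₂ p.2), ⟨?_, ?_⟩, ?_⟩
      · rintro ρ ⟨i, rfl⟩
        simp only [Sum.elim_inl, Function.update_apply]
        split <;> linarith
      · intro ρ hρ
        rcases ρ with i | j
        · exact absurd ⟨i, rfl⟩ hρ
        · simp only [Sum.elim_inr, Function.update_apply]
          split <;> first | linarith | norm_num
      · simp only [picTwoPiR, Sum.elim_inl, Sum.elim_inr]
        rw [sum_update_base, sum_update_base, sum_mul_update_base, Prod.ext_iff]
        have h0 : (c O₂ : ℝ) = 0 := by exact_mod_cast hc0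
        constructor <;> simp [h0] <;> ring
  · -- R = range inr
    ext p
    constructor
    · rintro ⟨x, ⟨hle, hge⟩, rfl⟩
      simp only [Set.mem_setOf_eq, picTwoPiR]
      have hB : ∑ j, x (Sum.inr j) ≤ -(ℓ₂ : ℝ) := by
        calc ∑ j, x (Sum.inr j) ≤ ∑ _j : Fin ℓ₂, (-1 : ℝ) :=
              Finset.sum_le_sum fun j _ => hle _ ⟨j, rfl⟩
        _ = -(ℓ₂ : ℝ) := by simp
      refine ⟨hB, ?_⟩
      have hA : 0 ≤ ∑ i, x (Sum.inl i) :=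
        Finset.sum_nonneg fun i _ => hge _ (by simp)
      have hC : ∑ j, -(c j : ℝ) ≤ ∑ j, (c j : ℝ) * x (Sum.inr j) := by
        refine Finset.sum_le_sum fun j _ => ?_
        have hcj : (c j : ℝ) ≤ 0 := by exact_mod_cast hcnp j
        have hbj : x (Sum.inr j) ≤ -1 := hle _ ⟨j, rfl⟩
        nlinarith
      rw [Finset.sum_neg_distrib] at hC
      rw [hcast]
      linarith
    · rintro ⟨hy, hx⟩
      refine ⟨Sum.elim (Function.update (fun _ => (0:ℝ)) O₁ (p.1 + ((∑ ν, c ν : ℤ) : ℝ)))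
        (Function.update (fun _ => (-1:ℝ)) O₂ (p.2 + (ℓ₂ : ℝ) - 1)), ⟨?_, ?_⟩, ?_⟩
      · rintro ρ ⟨j, rfl⟩
        simp only [Sum.elim_inr, Function.update_apply]
        split <;> linarith
      · intro ρ hρ
        rcases ρ with i | j
        · simp only [Sum.elim_inl, Function.update_apply]
          split <;> first | linarith | norm_num
        · exact absurd ⟨j, rfl⟩ hρ
      · simp only [picTwoPiR, Sum.elim_inl, Sum.elim_inr]
        rw [sum_update_base, sum_update_base, sum_mul_update_base, Prod.ext_iff]
        have h0 : (c O₂ : ℝ) = 0 := by exact_mod_cast hc0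
        constructor <;> simp [h0, hcast] <;> ring
  · -- R = range inl ∪ range inr
    ext p
    constructor
    · rintro ⟨x, ⟨hle, -⟩, rfl⟩
      simp only [Set.mem_setOf_eq, picTwoPiR]
      have hB : ∑ j, x (Sum.inr j) ≤ -(ℓ₂ : ℝ) := by
        calc ∑ j, x (Sum.inr j) ≤ ∑ _j : Fin ℓ₂, (-1 : ℝ) :=
              Finset.sum_le_sum fun j _ => hle _ (Or.inr ⟨j, rfl⟩)
        _ = -(ℓ₂ : ℝ) := by simp
      refine ⟨hB, ?_⟩
      have hA : ∑ i, x (Sum.inl i) ≤ -(ℓ₁ : ℝ) := by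
        calc ∑ i, x (Sum.inl i) ≤ ∑ _i : Fin ℓ₁, (-1 : ℝ) :=
              Finset.sum_le_sum fun i _ => hle _ (Or.inl ⟨i, rfl⟩)
        _ = -(ℓ₁ : ℝ) := by simp
      have hC : ∑ j, (c j : ℝ) * x (Sum.inr j)
          ≤ ∑ j, ((c L : ℝ) * x (Sum.inr j) + (c L : ℝ) - (c j : ℝ)) := by
        refine Finset.sum_le_sum fun j _ => ?_
        have hcj : (c L : ℝ) ≤ c j := by exact_mod_cast hcL j
        have hbj : x (Sum.inr j) ≤ -1 := hle _ (Or.inr ⟨j, rfl⟩)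
        nlinarith
      rw [Finset.sum_sub_distrib, Finset.sum_add_distrib, ← Finset.mul_sum,
        Finset.sum_const, Finset.card_univ] at hC
      simp only [Fintype.card_fin, nsmul_eq_mul] at hC
      have hexp : (c L : ℝ) * (∑ j, x (Sum.inr j) + (ℓ₂ : ℝ))
          = (c L : ℝ) * ∑ j, x (Sum.inr j) + (ℓ₂ : ℝ) * (c L : ℝ) := by ring
      rw [hcast]
      linarith
    · rintro ⟨hy, hx⟩
      refine ⟨Sum.elim
        (Function.update (fun _ => (-1:ℝ)) O₁
          (p.1 + ((∑ ν, c ν : ℤ) : ℝ) - (c L : ℝ) * (p.2 + (ℓ₂ : ℝ)) + (ℓ₁ : ℝ) - 1))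
        (Function.update (fun _ => (-1:ℝ)) L (p.2 + (ℓ₂ : ℝ) - 1)), ⟨?_, ?_⟩, ?_⟩
      · rintro ρ (⟨i, rfl⟩ | ⟨j, rfl⟩)
        · simp only [Sum.elim_inl, Function.update_apply]
          split <;> linarith
        · simp only [Sum.elim_inr, Function.update_apply]
          split <;> linarith
      · intro ρ hρ
        rcases ρ with i | j
        · exact absurd (Or.inl ⟨i, rfl⟩) hρ
        · exact absurd (Or.inr ⟨j, rfl⟩) hρ
      · simp only [picTwoPiR, Sum.elim_inl, Sum.elim_inr]
        rw [sum_update_base, sum_update_base, sum_mul_update_base, Prod.ext_iff]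
        constructor <;> simp [hcast] <;> ring
end

section
/- With the notation of the context, for every subset J ⊆ {1, …, k} and every point a ∈ Nuns(ℓ), the point a (regarded as an element of ℝ^k) does not belong to ℳ_ℝ(R(J)). (That is, all classes in the generating immaculate seed are really immaculate line bundles on the splitting-fan toric variety determined by the data (ℓ, c), for all choices of the parameters c.) -/
open scoped BigOperators

/-- The class map `π : ℝ^{ℓ₁+…+ℓ_k} → ℝ^k` of a splitting fan: block upper triangular
with all-ones diagonal blocks and blocks `c i j` above the diagonal. -/
noncomputable def splitPiR (k : ℕ) (ℓ : Fin k → ℕ)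
    (c : ∀ i j : Fin k, Fin (ℓ j) → ℤ)
    (x : (Σ j : Fin k, Fin (ℓ j)) → ℝ) : Fin k → ℝ :=
  fun i => (∑ ν : Fin (ℓ i), x ⟨i, ν⟩) +
    ∑ j : Fin k, if i < j then ∑ ν : Fin (ℓ j), (c i j ν : ℝ) * x ⟨j, ν⟩ else 0

/-- The real maculate region `ℳ_ℝ(R(J))` for `J ⊆ {1,…,k}`,
where `R(J)` is the union of the blocks indexed by `J`. -/
noncomputable def splitMacR (k : ℕ) (ℓ : Fin k → ℕ)
    (c : ∀ i j : Fin k, Fin (ℓ j) → ℤ) (J : Set (Fin k)) : Set (Fin k → ℝ) :=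
  splitPiR k ℓ c ''
    {x | (∀ ρ : Σ j : Fin k, Fin (ℓ j), ρ.1 ∈ J → x ρ ≤ -1) ∧
         (∀ ρ : Σ j : Fin k, Fin (ℓ j), ρ.1 ∉ J → 0 ≤ x ρ)}

/-- The generating immaculate seed `Nuns(ℓ) ⊆ ℤ^k`. -/
def nuns (k : ℕ) (ℓ : Fin k → ℕ) : Set (Fin k → ℤ) :=
  {a | ∃ j : Fin k, (-((ℓ j : ℤ) - 1) ≤ a j ∧ a j ≤ -1) ∧ ∀ i : Fin k, j < i → a i = 0}

/-- Every element of the generating immaculate seed lies outside every maculate region,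
i.e. all classes in `Nuns(ℓ)` are really immaculate, for all parameters `c`. -/
theorem statement11 (k : ℕ) (hk : 1 ≤ k) (ℓ : Fin k → ℕ) (hℓ : ∀ j, 2 ≤ ℓ j)
    (c : ∀ i j : Fin k, Fin (ℓ j) → ℤ)
    (hc : ∀ i j : Fin k, i < j → ∀ ν, c i j ν ≤ 0)
    (J : Set (Fin k)) (a : Fin k → ℤ) (ha : a ∈ nuns k ℓ) :
    (fun i => (a i : ℝ)) ∉ splitMacR k ℓ c J := by
  rintro ⟨x, ⟨hx1, hx2⟩, hπ⟩
  obtain ⟨j, ⟨haj1, haj2⟩, haz⟩ := ha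
  have hπ' : ∀ i : Fin k,
      (∑ ν : Fin (ℓ i), x ⟨i, ν⟩) +
        ∑ j' : Fin k, (if i < j' then ∑ ν : Fin (ℓ j'), (c i j' ν : ℝ) * x ⟨j', ν⟩ else 0)
        = (a i : ℝ) := fun i => congrFun hπ i
  -- key: all blocks above `j` vanish
  have key : ∀ n : ℕ, ∀ i : Fin k, k - i.val ≤ n → j < i → ∀ ν, x ⟨i, ν⟩ = 0 := by
    intro n
    induction n with
    | zero =>
      intro i hi _
      have := i.isLt
      omega
    | succ n ih =>
      intro i hi hji ν
      have hcross : ∀ j' : Fin k,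
          (if i < j' then ∑ ν : Fin (ℓ j'), (c i j' ν : ℝ) * x ⟨j', ν⟩ else 0) = 0 := by
        intro j'
        split
        · next h =>
          refine Finset.sum_eq_zero fun ν' _ => ?_
          rw [ih j' (by omega) (lt_trans hji h), mul_zero]
        · rfl
      have hsum : (∑ ν : Fin (ℓ i), x ⟨i, ν⟩) = 0 := by
        have h := hπ' i
        rw [Finset.sum_eq_zero (fun j' _ => hcross j'), haz i hji] at h
        simpa using h
      by_cases hiJ : i ∈ J
      · exfalso
        have hle : (∑ ν : Fin (ℓ i), x ⟨i, ν⟩) ≤ ∑ _ν : Fin (ℓ i), (-1 : ℝ) :=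
          Finset.sum_le_sum fun ν' _ => hx1 ⟨i, ν'⟩ hiJ
        have h2 : (2 : ℝ) ≤ (ℓ i : ℝ) := by exact_mod_cast hℓ i
        rw [hsum, Finset.sum_const, Finset.card_univ, Fintype.card_fin] at hle
        simp only [nsmul_eq_mul, mul_neg_one] at hle
        linarith
      · exact (Finset.sum_eq_zero_iff_of_nonneg
          (fun ν' _ => hx2 ⟨i, ν'⟩ hiJ)).mp hsum ν (Finset.mem_univ ν)
  have hcrossj : ∀ j' : Fin k,
      (if j < j' then ∑ ν : Fin (ℓ j'), (c j j' ν : ℝ) * x ⟨j', ν⟩ else 0) = 0 := by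
    intro j'
    split
    · next h =>
      refine Finset.sum_eq_zero fun ν' _ => ?_
      rw [key k j' (by omega) h, mul_zero]
    · rfl
  have hsumj : (∑ ν : Fin (ℓ j), x ⟨j, ν⟩) = (a j : ℝ) := by
    have h := hπ' j
    rw [Finset.sum_eq_zero (fun j' _ => hcrossj j')] at h
    simpa using h
  by_cases hjJ : j ∈ J
  · have hle : (∑ ν : Fin (ℓ j), x ⟨j, ν⟩) ≤ ∑ _ν : Fin (ℓ j), (-1 : ℝ) :=
      Finset.sum_le_sum fun ν' _ => hx1 ⟨j, ν'⟩ hjJ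
    rw [hsumj, Finset.sum_const, Finset.card_univ, Fintype.card_fin] at hle
    simp only [nsmul_eq_mul, mul_neg_one] at hle
    have h1 : (-((ℓ j : ℤ) - 1) : ℝ) ≤ (a j : ℝ) := by exact_mod_cast haj1
    push_cast at h1
    linarith
  · have hge : (0 : ℝ) ≤ ∑ ν : Fin (ℓ j), x ⟨j, ν⟩ :=
      Finset.sum_nonneg fun ν' _ => hx2 ⟨j, ν'⟩ hjJ
    rw [hsumj] at hge
    have h2 : (a j : ℝ) ≤ -1 := by exact_mod_cast haj2
    linarith
end

section
/- With the notation of the context, both sets Imm_ℤ := ℤ^k \ ⋃_{J ⊆ {1,…,k}} ℳ_ℤ(R(J)) and Imm_ℝ := {a ∈ ℤ^k : a ∉ ⋃_{J ⊆ {1,…,k}} ℳ_ℝ(R(J))} are closed under the c-hull operation: if a belongs to the set and a_i = 0 for all i > j (for some 0 ≤ j ≤ k−1), then a − v_{j+1} also belongs to the set. -/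
open scoped BigOperators

set_option linter.unusedVariables false

/-- The integral class map `π : ℤ^{ℓ₁+…+ℓ_k} → ℤ^k` of a splitting fan. -/
def splitPiZ (k : ℕ) (ℓ : Fin k → ℕ)
    (c : ∀ i j : Fin k, Fin (ℓ j) → ℤ)
    (x : (Σ j : Fin k, Fin (ℓ j)) → ℤ) : Fin k → ℤ :=
  fun i => (∑ ν : Fin (ℓ i), x ⟨i, ν⟩) +
    ∑ j : Fin k, if i < j then ∑ ν : Fin (ℓ j), c i j ν * x ⟨j, ν⟩ else 0

/-- The integral maculate set `ℳ_ℤ(R(J))`. -/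
def splitMacZ (k : ℕ) (ℓ : Fin k → ℕ)
    (c : ∀ i j : Fin k, Fin (ℓ j) → ℤ) (J : Set (Fin k)) : Set (Fin k → ℤ) :=
  splitPiZ k ℓ c ''
    {x | (∀ ρ : Σ j : Fin k, Fin (ℓ j), ρ.1 ∈ J → x ρ ≤ -1) ∧
         (∀ ρ : Σ j : Fin k, Fin (ℓ j), ρ.1 ∉ J → 0 ≤ x ρ)}

/-- The immaculate locus `Imm_ℤ ⊆ ℤ^k`. -/
def immZ (k : ℕ) (ℓ : Fin k → ℕ)
    (c : ∀ i j : Fin k, Fin (ℓ j) → ℤ) : Set (Fin k → ℤ) :=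
  {a | ∀ J : Set (Fin k), a ∉ splitMacZ k ℓ c J}

/-- The really immaculate locus `Imm_ℝ ⊆ ℤ^k`. -/
def immR (k : ℕ) (ℓ : Fin k → ℕ)
    (c : ∀ i j : Fin k, Fin (ℓ j) → ℤ) : Set (Fin k → ℤ) :=
  {a | ∀ J : Set (Fin k), (fun i => (a i : ℝ)) ∉ splitMacR k ℓ c J}

/-- The shift vector `v_j = (ĉ_{1j}, …, ĉ_{j-1,j}, ℓ_j, 0, …, 0) ∈ ℤ^k`. -/
def vvec (k : ℕ) (ℓ : Fin k → ℕ)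
    (c : ∀ i j : Fin k, Fin (ℓ j) → ℤ) (j : Fin k) : Fin k → ℤ :=
  fun i => if i = j then (ℓ j : ℤ) else if i < j then ∑ ν : Fin (ℓ j), c i j ν else 0

/-- `S` is closed under the `c`-hull operation: if `a ∈ S` vanishes on all coordinates
`≥ j` (with `j` 0-based, corresponding to the shift `v_{j+1}` in 1-based notation),
then `a - v_j ∈ S`. -/
def ClosedUnderCHull (k : ℕ) (ℓ : Fin k → ℕ)
    (c : ∀ i j : Fin k, Fin (ℓ j) → ℤ) (S : Set (Fin k → ℤ)) : Prop :=
  ∀ a ∈ S, ∀ j : Fin k, (∀ i : Fin k, j ≤ i → a i = 0) → (a - vvec k ℓ c j) ∈ S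

/-!
Suppose `π x = a - v_j` with `x` in the orthant of `J` and `a` vanishing from index `j` on.
Going down from the last block, `x` vanishes on every block above `j`: such a block has
constant sign and, the higher blocks being zero, sums to `a_i = 0`. Then block `j` sums to
`-ℓ_j` while each of its entries is `≤ -1` or `≥ 0`, so all of them are `≥ -1`; raising them by
one gives a point of the orthant of `J \ {j}` that `π` maps to `a`. So `a - v_j` maculate forces
`a` maculate, and the argument is the same over `ℤ` and over `ℝ`.
-/

namespace SplittingFan

variable {R : Type*} {k : ℕ} {ℓ : Fin k → ℕ}

section CommRing

variable [CommRing R]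

def classMap (c : ∀ i j : Fin k, Fin (ℓ j) → R) (x : (Σ j : Fin k, Fin (ℓ j)) → R) :
    Fin k → R :=
  fun i => (∑ ν : Fin (ℓ i), x ⟨i, ν⟩) +
    ∑ j : Fin k, if i < j then ∑ ν : Fin (ℓ j), c i j ν * x ⟨j, ν⟩ else 0

def shiftVec (c : ∀ i j : Fin k, Fin (ℓ j) → R) (j : Fin k) : Fin k → R :=
  fun i => if i = j then (ℓ j : R) else if i < j then ∑ ν : Fin (ℓ j), c i j ν else 0

def blockIndicator (j : Fin k) : (Σ j : Fin k, Fin (ℓ j)) → R :=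
  fun ρ => if ρ.1 = j then 1 else 0

variable (c : ∀ i j : Fin k, Fin (ℓ j) → R)

theorem classMap_add (x y : (Σ j : Fin k, Fin (ℓ j)) → R) :
    classMap c (x + y) = classMap c x + classMap c y := by
  ext i
  simp only [classMap, Pi.add_apply, mul_add, Finset.sum_add_distrib, ite_add_zero]
  ring

theorem classMap_blockIndicator (j : Fin k) :
    classMap c (blockIndicator j) = shiftVec c j := by
  ext i
  have hblock : ∀ j', (∑ ν : Fin (ℓ j'), c i j' ν * blockIndicator j ⟨j', ν⟩) =
      if j' = j then ∑ ν : Fin (ℓ j), c i j ν else 0 := by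
    rintro j'
    split_ifs with h
    · subst h; simp [blockIndicator]
    · simp [blockIndicator, h]
  simp only [classMap, shiftVec, hblock]
  rw [Fintype.sum_eq_single j fun j' hj' => by simp [hj']]
  rcases lt_trichotomy i j with hij | rfl | hji
  · simp [blockIndicator, hij, hij.ne]
  · simp [blockIndicator]
  · simp [blockIndicator, hji.ne', not_lt_of_gt hji]

theorem classMap_apply_of_eq_zero_above {x : (Σ j : Fin k, Fin (ℓ j)) → R} {i : Fin k}
    (hx : ∀ ρ : Σ j : Fin k, Fin (ℓ j), i < ρ.1 → x ρ = 0) :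
    classMap c x i = ∑ ν : Fin (ℓ i), x ⟨i, ν⟩ := by
  simp +contextual [classMap, hx]

end CommRing

section Ordered

variable [CommRing R] [LinearOrder R] [IsStrictOrderedRing R]

def shiftedOrthant (J : Set (Fin k)) : Set ((Σ j : Fin k, Fin (ℓ j)) → R) :=
  {x | (∀ ρ : Σ j : Fin k, Fin (ℓ j), ρ.1 ∈ J → x ρ ≤ -1) ∧
       (∀ ρ : Σ j : Fin k, Fin (ℓ j), ρ.1 ∉ J → 0 ≤ x ρ)}

def maculateRegion (c : ∀ i j : Fin k, Fin (ℓ j) → R) (J : Set (Fin k)) : Set (Fin k → R) :=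
  classMap c '' shiftedOrthant J

theorem block_eq_zero_of_sum_eq_zero {J : Set (Fin k)} {x : (Σ j : Fin k, Fin (ℓ j)) → R}
    (hx : x ∈ shiftedOrthant J) {i : Fin k} (hsum : ∑ ν : Fin (ℓ i), x ⟨i, ν⟩ = 0)
    (ν : Fin (ℓ i)) : x ⟨i, ν⟩ = 0 := by
  by_cases hi : i ∈ J
  · refine (Finset.sum_eq_zero_iff_of_nonpos fun μ _ => ?_).mp hsum ν (Finset.mem_univ ν)
    linarith [hx.1 ⟨i, μ⟩ hi]
  · exact (Finset.sum_eq_zero_iff_of_nonneg fun μ _ => hx.2 ⟨i, μ⟩ hi).mp hsum ν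
      (Finset.mem_univ ν)

variable {c : ∀ i j : Fin k, Fin (ℓ j) → R}

theorem eq_zero_above_of_classMap_eq_zero {J : Set (Fin k)} {x : (Σ j : Fin k, Fin (ℓ j)) → R}
    (hx : x ∈ shiftedOrthant J) {j : Fin k} (h : ∀ i, j < i → classMap c x i = 0) :
    ∀ ρ : Σ j : Fin k, Fin (ℓ j), j < ρ.1 → x ρ = 0 := by
  rintro ⟨i, ν⟩ hji
  induction i using WellFoundedGT.induction with
  | ind i ih =>
    have hsum : ∑ μ : Fin (ℓ i), x ⟨i, μ⟩ = 0 := by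
      rw [← classMap_apply_of_eq_zero_above c fun ρ hρ => ih ρ.1 hρ ρ.2 (hji.trans hρ)]
      exact h i hji
    exact block_eq_zero_of_sum_eq_zero hx hsum ν

theorem add_blockIndicator_mem_shiftedOrthant {J : Set (Fin k)}
    {x : (Σ j : Fin k, Fin (ℓ j)) → R} (hx : x ∈ shiftedOrthant J) {j : Fin k}
    (hsum : ∑ ν : Fin (ℓ j), x ⟨j, ν⟩ = -(ℓ j : R)) :
    x + blockIndicator j ∈ shiftedOrthant (J \ {j}) := by
  constructor
  · rintro ⟨i, ν⟩ ⟨hiJ, hij⟩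
    simpa [blockIndicator, show i ≠ j from hij] using hx.1 _ hiJ
  · rintro ⟨i, ν⟩ hi
    by_cases hij : i = j
    · subst hij
      simp only [Pi.add_apply, blockIndicator, if_true]
      by_cases hiJ : i ∈ J
      · have hblock := (Finset.sum_eq_zero_iff_of_nonpos (f := fun μ => x ⟨i, μ⟩ + 1)
          fun μ _ => by linarith [hx.1 ⟨i, μ⟩ hiJ]).mp
          (by simp [Finset.sum_add_distrib, hsum]) ν (Finset.mem_univ ν)
        exact hblock.ge
      · linarith [hx.2 ⟨i, ν⟩ hiJ]
    · simpa [blockIndicator, hij] using hx.2 _ fun hiJ => hi ⟨hiJ, hij⟩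

theorem mem_maculateRegion_of_sub_shiftVec_mem {a : Fin k → R} {j : Fin k}
    (ha : ∀ i, j ≤ i → a i = 0) {J : Set (Fin k)}
    (h : a - shiftVec c j ∈ maculateRegion c J) : a ∈ maculateRegion c (J \ {j}) := by
  obtain ⟨x, hx, hxa⟩ := h
  have hzero := eq_zero_above_of_classMap_eq_zero hx (c := c) (j := j) fun i hji => by
    simp [hxa, ha i hji.le, shiftVec, hji.ne', not_lt_of_gt hji]
  have hsum : ∑ ν : Fin (ℓ j), x ⟨j, ν⟩ = -(ℓ j : R) := by
    rw [← classMap_apply_of_eq_zero_above c hzero, hxa]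
    simp [ha j le_rfl, shiftVec]
  refine ⟨x + blockIndicator j, add_blockIndicator_mem_shiftedOrthant hx hsum, ?_⟩
  rw [classMap_add, classMap_blockIndicator, hxa, sub_add_cancel]

end Ordered

end SplittingFan

theorem statement12_general (k : ℕ) (ℓ : Fin k → ℕ)
    (c : ∀ i j : Fin k, Fin (ℓ j) → ℤ) :
    ClosedUnderCHull k ℓ c (immZ k ℓ c) ∧ ClosedUnderCHull k ℓ c (immR k ℓ c) := by
  -- `splitMacZ`, `splitMacR` and `vvec` unfold to `maculateRegion` and `shiftVec`.
  refine ⟨fun a ha j hj J hJ => ?_, fun a ha j hj J hJ => ?_⟩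
  · exact ha (J \ {j}) (SplittingFan.mem_maculateRegion_of_sub_shiftVec_mem hj hJ)
  · have hcast : (fun i => (((a - vvec k ℓ c j) i : ℤ) : ℝ)) =
        (fun i => (a i : ℝ)) - SplittingFan.shiftVec (fun i j ν => (c i j ν : ℝ)) j := by
      ext i
      simp only [vvec, SplittingFan.shiftVec, Pi.sub_apply]
      split_ifs <;> push_cast <;> rfl
    refine ha (J \ {j}) (SplittingFan.mem_maculateRegion_of_sub_shiftVec_mem (fun i hi => ?_) ?_)
    · simp [hj i hi]
    · rw [← hcast]
      exact hJ

/-- Both the immaculate locus `Imm_ℤ` and the really immaculate locus `Imm_ℝ` of a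
splitting-fan toric variety are closed under the `c`-hull operation. -/
theorem statement12 (k : ℕ) (hk : 1 ≤ k) (ℓ : Fin k → ℕ) (hℓ : ∀ j, 2 ≤ ℓ j)
    (c : ∀ i j : Fin k, Fin (ℓ j) → ℤ)
    (hc : ∀ i j : Fin k, i < j → ∀ ν, c i j ν ≤ 0) :
    ClosedUnderCHull k ℓ c (immZ k ℓ c) ∧ ClosedUnderCHull k ℓ c (immR k ℓ c) :=
  statement12_general k ℓ c
end

section
/- With the notation of the context, assume additionally that for each j = 1, …, k−1 the vector c_{j,j+1} ∈ ℤ^{ℓ_{j+1}} has at least two entries differing by more than ℓ_j (i.e., there exist ν, μ with |c_{j,j+1}^ν − c_{j,j+1}^μ| > ℓ_j). Then ℤ^k \ ⋃_{J ⊆ {1,…,k}} ℳ_ℤ(R(J)) = {a ∈ ℤ^k : a ∉ ⋃_{J ⊆ {1,…,k}} ℳ_ℝ(R(J))} = ⟨Nuns(ℓ)⟩_c. (That is, for such general parameters c, the immaculate and really immaculate loci of the splitting-fan toric variety both coincide with the c-hull of the generating immaculate seed.) -/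
/-!
Call `a` maculate if `a = π x` for some `x` each of whose blocks is either entrywise `≥ 0` or
entrywise `≤ -1`; this is membership in some `ℳ(R(J))`. If `π x` vanishes in the coordinates
above `j`, then so do the blocks of `x` above `j`, and `(π x)_j` is the sum of block `j`, which is
`≥ 0` or `≤ -ℓ_j`. Hence no seed is maculate, and if `a - v_j` is maculate then so is `a` (block
`j` is then constantly `-1` and can be raised to `0`): the hull is really immaculate.

Conversely, for `a` outside the hull and vanishing above `j`, we pick a sign-uniform block `y`
with sum `a_j` such that `a - π y` is still outside the hull, and recurse on `j - 1`. When
`a_j ≥ 1` or `a_j ≤ -ℓ_j - 1`, two such `y` differing by a unit moved from entry `ν` to entry `μ`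
give values of coordinate `j - 1` differing by `c_{j-1,j}^μ - c_{j-1,j}^ν`, which exceeds
`ℓ_{j-1}` in absolute value, while hull elements vanishing above `j - 1` have that coordinate in
`[-ℓ_{j-1}, 0]`; so one of the two choices works.
-/

open scoped BigOperators

set_option linter.unusedVariables false

/-- The `c`-hull of `G ⊆ ℤ^k`: the smallest superset closed under the shift operation
`a ↦ a - v_j` applied to elements vanishing in all coordinates `≥ j`. -/
def cHull (k : ℕ) (ℓ : Fin k → ℕ)
    (c : ∀ i j : Fin k, Fin (ℓ j) → ℤ) (G : Set (Fin k → ℤ)) : Set (Fin k → ℤ) :=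
  ⋂₀ {H | G ⊆ H ∧
    ∀ a ∈ H, ∀ j : Fin k, (∀ i : Fin k, j ≤ i → a i = 0) → (a - vvec k ℓ c j) ∈ H}


def splitPi (R : Type*) [CommRing R] (k : ℕ) (ℓ : Fin k → ℕ)
    (c : ∀ i j : Fin k, Fin (ℓ j) → ℤ) :
    ((Σ j : Fin k, Fin (ℓ j)) → R) →ₗ[R] (Fin k → R) where
  toFun x i := (∑ ν : Fin (ℓ i), x ⟨i, ν⟩) +
    ∑ j : Fin k, if i < j then ∑ ν : Fin (ℓ j), (c i j ν : R) * x ⟨j, ν⟩ else 0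
  map_add' x y := by
    funext i
    simp only [Pi.add_apply, mul_add, Finset.sum_add_distrib, ite_add_zero]
    ring
  map_smul' r x := by
    funext i
    simp only [Pi.smul_apply, smul_eq_mul, RingHom.id_apply, Finset.mul_sum, mul_add,
      mul_ite, mul_zero, mul_left_comm]

def SignUniform {ι R : Type*} [Zero R] [One R] [Neg R] [LE R] (y : ι → R) : Prop :=
  (∀ ν, 0 ≤ y ν) ∨ ∀ ν, y ν ≤ -1

def IsMaculate (R : Type*) [CommRing R] [LE R] (k : ℕ) (ℓ : Fin k → ℕ)
    (c : ∀ i j : Fin k, Fin (ℓ j) → ℤ) (a : Fin k → R) : Prop :=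
  ∃ x : (Σ j : Fin k, Fin (ℓ j)) → R,
    (∀ j, SignUniform fun ν => x ⟨j, ν⟩) ∧ splitPi R k ℓ c x = a

def IsGeneral (k : ℕ) (ℓ : Fin k → ℕ) (c : ∀ i j : Fin k, Fin (ℓ j) → ℤ) : Prop :=
  ∀ j : Fin k, ∀ h : (j : ℕ) + 1 < k,
    ∃ ν μ : Fin (ℓ ⟨(j : ℕ) + 1, h⟩),
      (ℓ j : ℤ) < |c j ⟨(j : ℕ) + 1, h⟩ ν - c j ⟨(j : ℕ) + 1, h⟩ μ|

namespace SignUniform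

variable {R : Type*} [CommRing R] [LinearOrder R] [IsStrictOrderedRing R]
  {ι : Type*} [Fintype ι] {y : ι → R}

theorem eq_zero_of_sum_eq_zero (hy : SignUniform y) (h : ∑ ν, y ν = 0) (ν : ι) : y ν = 0 := by
  rcases hy with hy | hy
  · exact (Finset.sum_eq_zero_iff_of_nonneg fun ν _ => hy ν).1 h ν (Finset.mem_univ ν)
  · have := (Finset.sum_eq_zero_iff_of_nonpos fun ν _ => (hy ν).trans (by norm_num)).1 h ν
      (Finset.mem_univ ν)
    linarith [hy ν]

theorem sum_nonneg_or_le_neg_card (hy : SignUniform y) :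
    0 ≤ ∑ ν, y ν ∨ ∑ ν, y ν ≤ -(Fintype.card ι : R) := by
  refine hy.imp (fun hy => Finset.sum_nonneg fun ν _ => hy ν) fun hy => ?_
  simpa using Finset.sum_le_sum fun ν (_ : ν ∈ Finset.univ) => hy ν

theorem add_one_nonneg (hy : SignUniform y) (h : ∑ ν, y ν = -(Fintype.card ι : R)) (ν : ι) :
    0 ≤ y ν + 1 := by
  rcases hy with hy | hy
  · linarith [hy ν]
  · have hsum : ∑ ν, y ν = ∑ _ν : ι, (-1 : R) := by simpa using h
    have := (Finset.sum_eq_sum_iff_of_le fun ν _ => hy ν).1 hsum ν (Finset.mem_univ ν)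
    linarith

end SignUniform

section

variable {k : ℕ} {ℓ : Fin k → ℕ} {c : ∀ i j : Fin k, Fin (ℓ j) → ℤ}

theorem splitPiZ_eq_splitPi : splitPiZ k ℓ c = splitPi ℤ k ℓ c := by
  funext x i
  simp [splitPiZ, splitPi]

theorem splitPiR_eq_splitPi : splitPiR k ℓ c = splitPi ℝ k ℓ c := rfl

theorem splitPi_map {R S : Type*} [CommRing R] [CommRing S] (f : R →+* S)
    (x : (Σ j : Fin k, Fin (ℓ j)) → R) :
    splitPi S k ℓ c (f ∘ x) = f ∘ splitPi R k ℓ c x := by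
  funext i
  simp [splitPi, apply_ite f]

theorem splitPi_apply_eq_block_sum {R : Type*} [CommRing R]
    {x : (Σ j : Fin k, Fin (ℓ j)) → R} {i : Fin k}
    (hx : ∀ j, i < j → ∀ ν, x ⟨j, ν⟩ = 0) :
    splitPi R k ℓ c x i = ∑ ν, x ⟨i, ν⟩ := by
  simp +contextual [splitPi, hx]

def blockVec {R : Type*} [Zero R] (j : Fin k) (y : Fin (ℓ j) → R) :
    (Σ j : Fin k, Fin (ℓ j)) → R :=
  fun ρ => Pi.single (M := fun j => Fin (ℓ j) → R) j y ρ.1 ρ.2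

@[simp]
theorem blockVec_self {R : Type*} [Zero R] (j : Fin k) (y : Fin (ℓ j) → R) (ν : Fin (ℓ j)) :
    blockVec j y ⟨j, ν⟩ = y ν := by
  simp [blockVec]

theorem blockVec_of_ne {R : Type*} [Zero R] {i j : Fin k} (h : i ≠ j) (y : Fin (ℓ j) → R)
    (ν : Fin (ℓ i)) : blockVec j y ⟨i, ν⟩ = 0 := by
  simp [blockVec, Pi.single_eq_of_ne' (Ne.symm h)]

theorem blockVec_zero {R : Type*} [Zero R] (j : Fin k) : blockVec j (0 : Fin (ℓ j) → R) = 0 := by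
  funext ρ
  simp [blockVec]

theorem blockVec_neg {R : Type*} [AddGroup R] (j : Fin k) (y : Fin (ℓ j) → R) :
    blockVec j (-y) = -blockVec j y := by
  funext ρ
  simp [blockVec, Pi.single_neg]

theorem splitPi_blockVec {R : Type*} [CommRing R] (j : Fin k) (y : Fin (ℓ j) → R) (i : Fin k) :
    splitPi R k ℓ c (blockVec j y) i =
      if i = j then ∑ ν, y ν else if i < j then ∑ ν, (c i j ν : R) * y ν else 0 := by
  rcases eq_or_ne i j with rfl | hij
  · rw [splitPi_apply_eq_block_sum fun j' h _ => blockVec_of_ne h.ne' _ _]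
    simp
  · simp only [splitPi, LinearMap.coe_mk, AddHom.coe_mk, blockVec_of_ne hij, if_neg hij,
      Finset.sum_const_zero, zero_add]
    rw [Finset.sum_eq_single j (fun j' _ h => by simp [blockVec_of_ne h]) (by simp)]
    simp

theorem splitPi_blockVec_one {R : Type*} [CommRing R] (j : Fin k) :
    splitPi R k ℓ c (blockVec j 1) = fun i => (vvec k ℓ c j i : R) := by
  funext i
  simp only [splitPi_blockVec, vvec, Pi.one_apply, mul_one]
  split_ifs <;> simp

theorem subset_cHull (G : Set (Fin k → ℤ)) : G ⊆ cHull k ℓ c G :=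
  Set.subset_sInter fun _ hH => hH.1

theorem sub_vvec_mem_cHull {G : Set (Fin k → ℤ)} {a : Fin k → ℤ} (ha : a ∈ cHull k ℓ c G)
    {j : Fin k} (hz : ∀ i, j ≤ i → a i = 0) : a - vvec k ℓ c j ∈ cHull k ℓ c G :=
  Set.mem_sInter.2 fun H hH => hH.2 a (ha H hH) j hz

theorem cHull_subset {G H : Set (Fin k → ℤ)} (hG : G ⊆ H)
    (hH : ∀ a ∈ H, ∀ j, (∀ i, j ≤ i → a i = 0) → a - vvec k ℓ c j ∈ H) : cHull k ℓ c G ⊆ H :=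
  Set.sInter_subset_of_mem ⟨hG, hH⟩

theorem exists_signPattern_iff {R : Type*} [Zero R] [One R] [Neg R] [LE R]
    (x : (Σ j : Fin k, Fin (ℓ j)) → R) :
    (∃ J : Set (Fin k), (∀ ρ : Σ j : Fin k, Fin (ℓ j), ρ.1 ∈ J → x ρ ≤ -1) ∧
      (∀ ρ : Σ j : Fin k, Fin (ℓ j), ρ.1 ∉ J → 0 ≤ x ρ)) ↔
      ∀ j, SignUniform fun ν => x ⟨j, ν⟩ := by
  constructor
  · rintro ⟨J, hJ, h0⟩ j
    by_cases hj : j ∈ J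
    exacts [Or.inr fun ν => hJ ⟨j, ν⟩ hj, Or.inl fun ν => h0 ⟨j, ν⟩ hj]
  · intro hx
    refine ⟨{j | ¬ ∀ ν, 0 ≤ x ⟨j, ν⟩}, fun ρ hρ => (hx ρ.1).resolve_left hρ ρ.2,
      fun ρ hρ => not_not.1 hρ ρ.2⟩

theorem forall_notMem_image_signPattern_iff {R β : Type*} [Zero R] [One R] [Neg R] [LE R]
    (f : ((Σ j : Fin k, Fin (ℓ j)) → R) → β) (b : β) :
    (∀ J : Set (Fin k), b ∉ f '' {x | (∀ ρ : Σ j : Fin k, Fin (ℓ j), ρ.1 ∈ J → x ρ ≤ -1) ∧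
      (∀ ρ : Σ j : Fin k, Fin (ℓ j), ρ.1 ∉ J → 0 ≤ x ρ)}) ↔
      ¬ ∃ x, (∀ j, SignUniform fun ν => x ⟨j, ν⟩) ∧ f x = b := by
  constructor
  · rintro h ⟨x, hx, rfl⟩
    obtain ⟨J, hJ⟩ := (exists_signPattern_iff x).2 hx
    exact h J ⟨x, hJ, rfl⟩
  · rintro h J ⟨x, hJ, rfl⟩
    exact h ⟨x, (exists_signPattern_iff x).1 ⟨J, hJ⟩, rfl⟩

theorem mem_immZ_iff {a : Fin k → ℤ} : a ∈ immZ k ℓ c ↔ ¬ IsMaculate ℤ k ℓ c a := by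
  rw [IsMaculate, ← splitPiZ_eq_splitPi]
  exact forall_notMem_image_signPattern_iff _ _

theorem mem_immR_iff {a : Fin k → ℤ} : a ∈ immR k ℓ c ↔ ¬ IsMaculate ℝ k ℓ c fun i => (a i : ℝ) :=
  forall_notMem_image_signPattern_iff _ _

section OrderedRing

variable {R : Type*} [CommRing R] [LinearOrder R] [IsStrictOrderedRing R]

theorem block_eq_zero_of_splitPi_eq_zero {x : (Σ j : Fin k, Fin (ℓ j)) → R}
    (hx : ∀ j, SignUniform fun ν => x ⟨j, ν⟩) (i : Fin k)
    (h : ∀ i', i ≤ i' → splitPi R k ℓ c x i' = 0) (ν : Fin (ℓ i)) : x ⟨i, ν⟩ = 0 := by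
  induction i using WellFoundedGT.induction with
  | _ i ih =>
    refine (hx i).eq_zero_of_sum_eq_zero ?_ ν
    rw [← splitPi_apply_eq_block_sum fun j hij =>
      ih j hij fun i' hi' => h i' (hij.le.trans hi')]
    exact h i le_rfl

theorem splitPi_apply_eq_block_sum_of_signUniform {x : (Σ j : Fin k, Fin (ℓ j)) → R}
    (hx : ∀ j, SignUniform fun ν => x ⟨j, ν⟩) {i : Fin k}
    (h : ∀ i', i < i' → splitPi R k ℓ c x i' = 0) :
    splitPi R k ℓ c x i = ∑ ν, x ⟨i, ν⟩ :=
  splitPi_apply_eq_block_sum fun j hij =>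
    block_eq_zero_of_splitPi_eq_zero hx j fun i' hi' => h i' (hij.trans_le hi')

theorem IsMaculate.intCast {a : Fin k → ℤ} (ha : IsMaculate ℤ k ℓ c a) :
    IsMaculate R k ℓ c fun i => (a i : R) := by
  obtain ⟨x, hx, rfl⟩ := ha
  refine ⟨fun ρ => (x ρ : R), fun j => (hx j).imp (fun h ν => Int.cast_nonneg (h ν))
    (fun h ν => by simpa using (Int.cast_le (R := R)).2 (h ν)), splitPi_map (Int.castRingHom R) x⟩

theorem not_isMaculate_of_mem_nuns {a : Fin k → ℤ} (ha : a ∈ nuns k ℓ) :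
    ¬ IsMaculate R k ℓ c fun i => (a i : R) := by
  rintro ⟨x, hx, hxa⟩
  obtain ⟨j, ⟨hlow, hhigh⟩, htop⟩ := ha
  have hsum := splitPi_apply_eq_block_sum_of_signUniform hx (i := j) fun i hi => by
    rw [hxa]
    simp [htop i hi]
  have hlow' : -((ℓ j : R) - 1) ≤ a j := by exact_mod_cast hlow
  have hhigh' : (a j : R) ≤ -1 := by exact_mod_cast hhigh
  rw [hxa] at hsum
  rcases (hx j).sum_nonneg_or_le_neg_card with h | h
  · linarith
  · rw [Fintype.card_fin] at h
    linarith

theorem isMaculate_of_isMaculate_sub_vvec {a : Fin k → R} {j : Fin k}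
    (hz : ∀ i, j ≤ i → a i = 0) (h : IsMaculate R k ℓ c fun i => a i - vvec k ℓ c j i) :
    IsMaculate R k ℓ c a := by
  obtain ⟨x, hx, hxa⟩ := h
  have hsum : ∑ ν, x ⟨j, ν⟩ = -(Fintype.card (Fin (ℓ j)) : R) := by
    rw [← splitPi_apply_eq_block_sum_of_signUniform hx fun i hi => ?_, hxa]
    · simp [hz j le_rfl, vvec]
    · simp [hxa, hz i hi.le, vvec, hi.ne', hi.not_gt]
  refine ⟨x + blockVec j 1, fun i => ?_, ?_⟩
  · rcases eq_or_ne i j with rfl | hij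
    · exact Or.inl fun ν => by simpa using (hx i).add_one_nonneg hsum ν
    · simpa [blockVec_of_ne hij] using hx i
  · ext i
    simp [splitPi_blockVec_one, hxa]

theorem cHull_nuns_subset_not_isMaculate :
    cHull k ℓ c (nuns k ℓ) ⊆ {a | ¬ IsMaculate R k ℓ c fun i => (a i : R)} := by
  refine cHull_subset (fun a ha => not_isMaculate_of_mem_nuns ha) fun a ha j hz hmac => ?_
  refine ha (isMaculate_of_isMaculate_sub_vvec (j := j) (fun i hi => by simp [hz i hi]) ?_)
  simpa using hmac

end OrderedRing

theorem cHull_nuns_subset_immR : cHull k ℓ c (nuns k ℓ) ⊆ immR k ℓ c :=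
  fun _ ha => mem_immR_iff.2 (cHull_nuns_subset_not_isMaculate ha)

theorem immR_subset_immZ : immR k ℓ c ⊆ immZ k ℓ c :=
  fun _ ha => mem_immZ_iff.2 fun h => mem_immR_iff.1 ha h.intCast

theorem exists_leading_of_mem_cHull (hℓ : ∀ j, 0 < ℓ j) {a : Fin k → ℤ}
    (ha : a ∈ cHull k ℓ c (nuns k ℓ)) :
    ∃ j, (-(ℓ j : ℤ) ≤ a j ∧ a j ≤ -1) ∧ ∀ i, j < i → a i = 0 := by
  refine cHull_subset (H := {a | ∃ j, (-(ℓ j : ℤ) ≤ a j ∧ a j ≤ -1) ∧ ∀ i, j < i → a i = 0})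
    ?_ (fun b _ j hz => ⟨j, ?_, fun i hi => ?_⟩) ha
  · rintro b ⟨j, ⟨hlow, hhigh⟩, htop⟩
    exact ⟨j, ⟨by omega, hhigh⟩, htop⟩
  · have := hℓ j
    simp only [Pi.sub_apply, vvec, if_pos, hz j le_rfl]
    omega
  · simp [vvec, hz i hi.le, hi.ne', hi.not_gt]

theorem zero_notMem_cHull (hℓ : ∀ j, 0 < ℓ j) : (0 : Fin k → ℤ) ∉ cHull k ℓ c (nuns k ℓ) := by
  intro h
  obtain ⟨j, ⟨_, hj⟩, _⟩ := exists_leading_of_mem_cHull hℓ h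
  simp at hj

theorem mem_Icc_of_mem_cHull (hℓ : ∀ j, 0 < ℓ j) {a : Fin k → ℤ}
    (ha : a ∈ cHull k ℓ c (nuns k ℓ)) {i : Fin k} (hi : ∀ i', i < i' → a i' = 0) :
    -(ℓ i : ℤ) ≤ a i ∧ a i ≤ 0 := by
  obtain ⟨j, ⟨hlow, hhigh⟩, htop⟩ := exists_leading_of_mem_cHull hℓ ha
  rcases lt_trichotomy i j with hij | rfl | hji
  · have := hi j hij
    omega
  · omega
  · simp [htop i hji]

theorem notMem_cHull_of_lt_abs_sub (hℓ : ∀ j, 0 < ℓ j) {a b : Fin k → ℤ} {i : Fin k}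
    (ha : ∀ i', i < i' → a i' = 0) (hb : ∀ i', i < i' → b i' = 0)
    (hab : (ℓ i : ℤ) < |a i - b i|) :
    a ∉ cHull k ℓ c (nuns k ℓ) ∨ b ∉ cHull k ℓ c (nuns k ℓ) := by
  by_contra! h
  have ha' := mem_Icc_of_mem_cHull hℓ h.1 ha
  have hb' := mem_Icc_of_mem_cHull hℓ h.2 hb
  exact hab.not_ge (abs_sub_le_iff.2 ⟨by omega, by omega⟩)

theorem exists_signUniform_transfer {n : ℕ} (ν μ : Fin n) {s : ℤ} (hs : 1 ≤ s ∨ s ≤ -n - 1) :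
    ∃ y : Fin n → ℤ, ∑ ν, y ν = s ∧ SignUniform y ∧
      SignUniform (y + Pi.single μ 1 - Pi.single ν 1) := by
  rcases hs with hs | hs
  · refine ⟨Pi.single ν s, by simp, Or.inl fun ι => ?_, Or.inl fun ι => ?_⟩
    all_goals simp only [Pi.add_apply, Pi.sub_apply, Pi.single_apply]; split_ifs <;> omega
  · refine ⟨-1 + Pi.single ν (s + n + 1) - Pi.single μ 1, ?_, Or.inr fun ι => ?_,
      Or.inr fun ι => ?_⟩
    · simp [Finset.sum_add_distrib, Finset.sum_sub_distrib]
      ring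
    all_goals simp only [Pi.add_apply, Pi.sub_apply, Pi.neg_apply, Pi.one_apply, Pi.single_apply]
    all_goals split_ifs <;> omega

theorem sub_splitPi_blockVec_eq_zero {a : Fin k → ℤ} {j : Fin k} (hz : ∀ i, j < i → a i = 0)
    {y : Fin (ℓ j) → ℤ} (hy : ∑ ν, y ν = a j) {i : Fin k} (hi : j ≤ i) :
    (a - splitPi ℤ k ℓ c (blockVec j y)) i = 0 := by
  rcases hi.eq_or_lt with rfl | hi
  · simp [splitPi_blockVec, hy]
  · simp [splitPi_blockVec, hz i hi, hi.ne', hi.not_gt]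

theorem splitPi_blockVec_transfer {i j : Fin k} (hij : i < j) (y : Fin (ℓ j) → ℤ)
    (ν μ : Fin (ℓ j)) :
    splitPi ℤ k ℓ c (blockVec j (y + Pi.single μ 1 - Pi.single ν 1)) i =
      splitPi ℤ k ℓ c (blockVec j y) i + (c i j μ - c i j ν) := by
  simp [splitPi_blockVec, hij, hij.ne, mul_add, mul_sub, Finset.sum_add_distrib,
    Finset.sum_sub_distrib, Pi.single_apply]
  ring

theorem exists_block_notMem_cHull_of_covBy (hℓ : ∀ j, 0 < ℓ j) {i j : Fin k} (hij : i ⋖ j)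
    (hc : ∃ ν μ : Fin (ℓ j), (ℓ i : ℤ) < |c i j ν - c i j μ|) {a : Fin k → ℤ}
    (hz : ∀ i', j < i' → a i' = 0) (hs : 1 ≤ a j ∨ a j ≤ -ℓ j - 1) :
    ∃ y, SignUniform y ∧ ∑ ν, y ν = a j ∧
      a - splitPi ℤ k ℓ c (blockVec j y) ∉ cHull k ℓ c (nuns k ℓ) := by
  obtain ⟨ν, μ, hνμ⟩ := hc
  obtain ⟨y, hy, hyu, hyu'⟩ := exists_signUniform_transfer ν μ hs
  set y' : Fin (ℓ j) → ℤ := y + Pi.single μ 1 - Pi.single ν 1 with hy'_def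
  have hy' : ∑ ι, y' ι = a j := by
    simp [y', Finset.sum_add_distrib, Finset.sum_sub_distrib, hy]
  have hvan : ∀ z : Fin (ℓ j) → ℤ, ∑ ι, z ι = a j →
      ∀ i', i < i' → (a - splitPi ℤ k ℓ c (blockVec j z)) i' = 0 :=
    fun z hz' i' hi' => sub_splitPi_blockVec_eq_zero hz hz' (hij.ge_of_gt hi')
  have hdiff : (ℓ i : ℤ) < |(a - splitPi ℤ k ℓ c (blockVec j y)) i -
      (a - splitPi ℤ k ℓ c (blockVec j y')) i| := by
    rw [Pi.sub_apply, Pi.sub_apply, hy'_def, splitPi_blockVec_transfer hij.lt, abs_sub_comm]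
    convert hνμ using 2
    ring
  rcases notMem_cHull_of_lt_abs_sub hℓ (hvan y hy) (hvan _ hy') hdiff with h | h
  exacts [⟨y, hyu, hy, h⟩, ⟨_, hyu', hy', h⟩]

theorem exists_block_notMem_cHull_of_forall_le (hℓ : ∀ j, 0 < ℓ j) {j : Fin k} (hj : ∀ i, j ≤ i)
    {a : Fin k → ℤ} (hz : ∀ i', j < i' → a i' = 0) (hs : 1 ≤ a j ∨ a j ≤ -ℓ j - 1) :
    ∃ y, SignUniform y ∧ ∑ ν, y ν = a j ∧
      a - splitPi ℤ k ℓ c (blockVec j y) ∉ cHull k ℓ c (nuns k ℓ) := by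
  obtain ⟨y, hy, hyu, -⟩ := exists_signUniform_transfer (⟨0, hℓ j⟩ : Fin (ℓ j)) ⟨0, hℓ j⟩ hs
  refine ⟨y, hyu, hy, ?_⟩
  convert zero_notMem_cHull (c := c) hℓ
  exact funext fun i => sub_splitPi_blockVec_eq_zero hz hy (hj i)

theorem exists_block_notMem_cHull (hℓ : ∀ j, 0 < ℓ j) (hgen : IsGeneral k ℓ c)
    {a : Fin k → ℤ} {j : Fin k} (hz : ∀ i, j < i → a i = 0)
    (ha : a ∉ cHull k ℓ c (nuns k ℓ)) :
    ∃ y, SignUniform y ∧ ∑ ν, y ν = a j ∧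
      a - splitPi ℤ k ℓ c (blockVec j y) ∉ cHull k ℓ c (nuns k ℓ) := by
  have := hℓ j
  rcases (by omega : a j = 0 ∨ a j = -ℓ j ∨ (-((ℓ j : ℤ) - 1) ≤ a j ∧ a j ≤ -1) ∨
    (1 ≤ a j ∨ a j ≤ -ℓ j - 1)) with h | h | h | h
  · exact ⟨0, Or.inl fun _ => le_rfl, by simp [h], by simpa [blockVec_zero] using ha⟩
  · refine ⟨-1, Or.inr fun _ => le_rfl, by simp [h], fun h' => ha ?_⟩
    -- `π` of the constant block `-1` is `-v_j`, and shifting `a + v_j` at `j` gives back `a`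
    convert sub_vvec_mem_cHull h' fun i hi => sub_splitPi_blockVec_eq_zero hz (by simp [h]) hi
    ext i
    simp [blockVec_neg, splitPi_blockVec_one]
  · exact absurd (subset_cHull _ (show a ∈ nuns k ℓ from ⟨j, h, hz⟩)) ha
  · obtain ⟨_ | p, hj⟩ := j
    · exact exists_block_notMem_cHull_of_forall_le hℓ (fun _ => Nat.zero_le _) hz h
    · exact exists_block_notMem_cHull_of_covBy hℓ (i := ⟨p, by omega⟩) (by simp [Fin.covBy_iff])
        (hgen ⟨p, by omega⟩ hj) hz h

theorem isMaculate_of_notMem_cHull (hℓ : ∀ j, 0 < ℓ j) (hgen : IsGeneral k ℓ c)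
    (m : ℕ) (hm : m ≤ k) {a : Fin k → ℤ} (hz : ∀ i : Fin k, m ≤ (i : ℕ) → a i = 0)
    (ha : a ∉ cHull k ℓ c (nuns k ℓ)) : IsMaculate ℤ k ℓ c a := by
  induction m generalizing a with
  | zero =>
    refine ⟨0, fun _ => Or.inl fun _ => le_rfl, ?_⟩
    ext i
    simp [hz i (Nat.zero_le _)]
  | succ m ih =>
    let j : Fin k := ⟨m, hm⟩
    have hzj : ∀ i, j < i → a i = 0 := fun i hi => hz i hi
    obtain ⟨y, hyu, hy, hy'⟩ := exists_block_notMem_cHull hℓ hgen hzj ha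
    have hz' : ∀ i, j ≤ i → (a - splitPi ℤ k ℓ c (blockVec j y)) i = 0 :=
      fun i => sub_splitPi_blockVec_eq_zero hzj hy
    obtain ⟨x, hx, hxa⟩ := ih (by omega) (fun i hi => hz' i hi) hy'
    have hxj := block_eq_zero_of_splitPi_eq_zero hx j (hxa ▸ hz')
    refine ⟨x + blockVec j y, fun i => ?_, by rw [map_add, hxa, sub_add_cancel]⟩
    rcases eq_or_ne i j with rfl | hij
    · simpa [hxj] using hyu
    · simpa [blockVec_of_ne hij] using hx i

theorem immZ_subset_cHull (hℓ : ∀ j, 0 < ℓ j) (hgen : IsGeneral k ℓ c) :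
    immZ k ℓ c ⊆ cHull k ℓ c (nuns k ℓ) := fun a ha => by
  by_contra h
  exact mem_immZ_iff.1 ha
    (isMaculate_of_notMem_cHull hℓ hgen k le_rfl (fun i hi => absurd i.isLt (by omega)) h)

end

theorem statement13_general (k : ℕ) (ℓ : Fin k → ℕ) (hℓ : ∀ j, 2 ≤ ℓ j)
    (c : ∀ i j : Fin k, Fin (ℓ j) → ℤ)
    (hgen : ∀ j : Fin k, ∀ h : (j : ℕ) + 1 < k,
      ∃ ν μ : Fin (ℓ ⟨(j : ℕ) + 1, h⟩),
        (ℓ j : ℤ) < |c j ⟨(j : ℕ) + 1, h⟩ ν - c j ⟨(j : ℕ) + 1, h⟩ μ|) :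
    immZ k ℓ c = cHull k ℓ c (nuns k ℓ) ∧ immR k ℓ c = cHull k ℓ c (nuns k ℓ) := by
  have hZ := immZ_subset_cHull (fun j => (hℓ j).trans_lt' two_pos) hgen
  exact ⟨hZ.antisymm (cHull_nuns_subset_immR.trans immR_subset_immZ),
    (immR_subset_immZ.trans hZ).antisymm cHull_nuns_subset_immR⟩

/-- For general parameters `c` (each consecutive block vector `c_{j,j+1}` has two
entries differing by more than `ℓ_j`), the immaculate and really immaculate loci of
the splitting-fan toric variety both equal the `c`-hull of the generating seed. -/
theorem statement13 (k : ℕ) (hk : 1 ≤ k) (ℓ : Fin k → ℕ) (hℓ : ∀ j, 2 ≤ ℓ j)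
    (c : ∀ i j : Fin k, Fin (ℓ j) → ℤ)
    (hc : ∀ i j : Fin k, i < j → ∀ ν, c i j ν ≤ 0)
    (hgen : ∀ j : Fin k, ∀ h : (j : ℕ) + 1 < k,
      ∃ ν μ : Fin (ℓ ⟨(j : ℕ) + 1, h⟩),
        (ℓ j : ℤ) < |c j ⟨(j : ℕ) + 1, h⟩ ν - c j ⟨(j : ℕ) + 1, h⟩ μ|) :
    immZ k ℓ c = cHull k ℓ c (nuns k ℓ) ∧ immR k ℓ c = cHull k ℓ c (nuns k ℓ) :=
  statement13_general k ℓ hℓ c hgen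
end
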